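/- arXiv:math/0411505 — 9 statements merged into one kernel-verified Lean document; each statement's English description precedes it below -/
import Mathlib

section
/- Every nonempty word over a totally ordered alphabet has a unique factorization as a product w = l_1 l_2 ... l_n of Lyndon words with l_1 ≥ l_2 ≥ ... ≥ l_n in the lexicographic order. -/
/-!
A Lyndon word is strictly smaller than each of its proper nonempty suffixes, and this
characterizes Lyndon words. Consequently, if `u < v` are Lyndon then so is `u ++ v`: this
yields existence, by pushing the letters of `w` one at a time onto the front of a factorization
of the rest and merging the front factor with the next one while it is smaller. For uniqueness,
every Lyndon prefix `p` of `m₁ m₂ ⋯` with `m₁ ≥ m₂ ≥ ⋯` satisfies `p ≤ m₁`: a nonempty suffix of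
`p` is a prefix of some `mᵢ`, and `p` is at most that suffix. Hence two factorizations of the same
word have the same first factor.
-/

/-- A word over a totally ordered alphabet is *Lyndon* if it is nonempty and
strictly lexicographically smaller than all of its nontrivial cyclic rotations. -/
def IsLyndon {α : Type*} [LinearOrder α] (w : List α) : Prop :=
  w ≠ [] ∧ ∀ k, 0 < k → k < w.length → List.Lex (· < ·) w (w.rotate k)

section

open List

variable {α : Type*} [LinearOrder α]

namespace List

theorem lt_of_append_lt_append_left {u v : List α} :
    ∀ {w : List α}, w ++ u < w ++ v → u < v
  | [], h => h
  | _ :: _, h => lt_of_append_lt_append_left (cons_lt_cons_self.mp h)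

theorem append_lt_append_of_lt_of_not_prefix {u v : List α} (h : u < v) (hp : ¬ u <+: v)
    (s t : List α) : u ++ s < v ++ t := by
  induction h with
  | nil => exact absurd nil_prefix hp
  | rel hab => exact Lex.rel hab
  | cons _ ih => exact Lex.cons (ih fun hp' => hp ((prefix_cons_inj _).mpr hp'))

theorem append_lt_append_of_lt_of_length_le {u v : List α} (h : u < v)
    (hlen : v.length ≤ u.length) (s t : List α) : u ++ s < v ++ t :=
  append_lt_append_of_lt_of_not_prefix h (fun hp => h.ne (hp.eq_of_length (le_antisymm
    hp.length_le hlen))) s t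

end List

theorem isLyndon_singleton (a : α) : IsLyndon [a] :=
  ⟨cons_ne_nil a [], fun k hk hk' => by simp at hk'; omega⟩

namespace IsLyndon

variable {x y : List α}

theorem lt_append_swap (h : IsLyndon (x ++ y)) (hx : x ≠ []) (hy : y ≠ []) :
    x ++ y < y ++ x := by
  have hrot := h.2 x.length (length_pos_iff.mpr hx) (by simp [length_pos_iff.mpr hy])
  rwa [rotate_append_length_eq] at hrot

theorem append_lt_right (h : IsLyndon (x ++ y)) (hx : x ≠ []) (hy : y ≠ []) : x ++ y < y := by
  have hswap := h.lt_append_swap hx hy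
  have hy_not_prefix : ¬ y <+: x ++ y := by
    -- from `x ++ y = y ++ z`, the rotations `z ++ y` and `y ++ x` give `x ++ y < z ++ y` and `z < x`
    rintro ⟨z, hz⟩
    have hz_len : z.length = x.length := by
      have := congrArg length hz
      simp only [length_append] at this
      omega
    have hz_ne : z ≠ [] := by rintro rfl; simp_all
    have h1 : x ++ y < z ++ y := hz ▸ (hz ▸ h).lt_append_swap hy hz_ne
    have h2 : z < x := lt_of_append_lt_append_left (w := y) (hz ▸ hswap)
    exact lt_asymm h1 (append_lt_append_of_lt_of_length_le h2 hz_len.ge y y)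
  rcases lt_trichotomy (x ++ y) y with hlt | heq | hgt
  · exact hlt
  · have := congrArg length heq
    simp [hx] at this
  · have := append_lt_append_of_lt_of_not_prefix hgt hy_not_prefix x []
    rw [append_nil] at this
    exact absurd this (lt_asymm hswap)

end IsLyndon

theorem isLyndon_iff_forall_lt_suffix {w : List α} :
    IsLyndon w ↔ w ≠ [] ∧ ∀ x y, x ≠ [] → y ≠ [] → x ++ y = w → w < y := by
  refine ⟨fun h => ⟨h.1, fun x y hx hy hxy => hxy ▸ (hxy ▸ h).append_lt_right hx hy⟩,
    fun ⟨hw, h⟩ => ⟨hw, fun k hk hkw => ?_⟩⟩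
  have hlt : w < w.drop k :=
    h _ _ (by simp [hw]; omega) (by simp; omega) (take_append_drop k w)
  rw [rotate_eq_drop_append_take hkw.le]
  simpa using append_lt_append_of_lt_of_length_le hlt (by simp) [] (w.take k)

theorem IsLyndon.append {u v : List α} (hu : IsLyndon u) (hv : IsLyndon v) (huv : u < v) :
    IsLyndon (u ++ v) := by
  have huv_v : u ++ v < v := by
    by_cases hp : u <+: v
    · obtain ⟨z, rfl⟩ := hp
      have hz : z ≠ [] := by rintro rfl; simp at huv
      exact append_left_lt (hv.append_lt_right hu.1 hz)
    · simpa using append_lt_append_of_lt_of_not_prefix huv hp v []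
  refine isLyndon_iff_forall_lt_suffix.mpr ⟨by simp [hu.1], fun x y hx hy hxy => ?_⟩
  rcases append_eq_append_iff.mp hxy with ⟨a, rfl, rfl⟩ | ⟨c, rfl, rfl⟩
  · rcases eq_or_ne a [] with rfl | ha
    · simpa using huv_v
    · exact append_lt_append_of_lt_of_length_le (hu.append_lt_right hx ha) (by simp) v v
  · rcases eq_or_ne c [] with rfl | hc
    · exact huv_v
    · exact huv_v.trans (hv.append_lt_right hc hy)

def IsLyndonFactorization (L : List (List α)) : Prop :=
  (∀ l ∈ L, IsLyndon l) ∧ L.IsChain (· ≥ ·)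

theorem exists_isLyndonFactorization_append :
    ∀ {L : List (List α)} {x : List α}, IsLyndon x → IsLyndonFactorization L →
      ∃ L', IsLyndonFactorization L' ∧ L'.flatten = x ++ L.flatten
  | [], x, hx, _ => ⟨[x], ⟨by simpa using hx, isChain_singleton x⟩, by simp⟩
  | l :: L, x, hx, ⟨hL, hchain⟩ => by
    by_cases hxl : x < l
    · obtain ⟨L', hL', hflat⟩ := exists_isLyndonFactorization_append
        (hx.append (hL l mem_cons_self) hxl)
        ⟨fun m hm => hL m (mem_cons_of_mem l hm), hchain.tail⟩
      exact ⟨L', hL', by simp [hflat]⟩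
    · refine ⟨x :: l :: L, ⟨?_, hchain.cons_cons (not_lt.mp hxl)⟩, rfl⟩
      rintro m (_ | ⟨_, hm⟩)
      exacts [hx, hL m hm]

theorem exists_isLyndonFactorization (w : List α) :
    ∃ L, IsLyndonFactorization L ∧ L.flatten = w := by
  induction w with
  | nil => exact ⟨[], ⟨by simp, isChain_nil⟩, rfl⟩
  | cons a w ih =>
    obtain ⟨L, hL, rfl⟩ := ih
    exact exists_isLyndonFactorization_append (isLyndon_singleton a) hL

/-- The prefix `x` grows as the induction passes the factors of `M` covered by the Lyndon word. -/
theorem IsLyndon.le_of_prefix_flatten {b : List α} :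
    ∀ {M : List (List α)}, (∀ m ∈ M, m ≤ b) → ∀ {x q : List α}, IsLyndon (x ++ q) →
      q ≠ [] → q <+: M.flatten → x ++ q ≤ b
  | [], _, _, _, _, hq, hqM => absurd (prefix_nil.mp hqM) hq
  | m :: M, hM, x, q, h, hq, hqM => by
    rw [flatten_cons] at hqM
    rcases le_or_gt q.length m.length with hlen | hlen
    · have hqm : q ≤ m :=
        not_lt.mp (prefix_of_prefix_length_le hqM (prefix_append m _) hlen).le
      have hqb := hqm.trans (hM m mem_cons_self)
      rcases eq_or_ne x [] with rfl | hx
      · exact hqb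
      · exact ((h.append_lt_right hx hq).le).trans hqb
    · obtain ⟨q', rfl⟩ := prefix_of_prefix_length_le (prefix_append m _) hqM hlen.le
      have hq' : q' ≠ [] := by rintro rfl; simp at hlen
      simpa using IsLyndon.le_of_prefix_flatten (fun m' hm' => hM m' (mem_cons_of_mem m hm'))
        (x := x ++ m) (by simpa using h) hq' ((prefix_append_right_inj m).mp hqM)

theorem IsLyndonFactorization.le_head {m l : List α} {M : List (List α)}
    (hM : IsLyndonFactorization (m :: M)) (hl : IsLyndon l) (hp : l <+: (m :: M).flatten) :
    l ≤ m := by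
  have hmax : ∀ m' ∈ m :: M, m' ≤ m := by
    rintro m' (_ | ⟨_, hm'⟩)
    exacts [le_rfl, (pairwise_cons.mp (isChain_iff_pairwise.mp hM.2)).1 m' hm']
  exact IsLyndon.le_of_prefix_flatten hmax (x := []) hl hl.1 hp

theorem IsLyndonFactorization.eq_of_flatten_eq :
    ∀ {L M : List (List α)}, IsLyndonFactorization L → IsLyndonFactorization M →
      L.flatten = M.flatten → L = M
  | [], [], _, _, _ => rfl
  | [], m :: M, _, hM, h => by simp [(hM.1 m mem_cons_self).1] at h
  | l :: L, [], hL, _, h => by simp [(hL.1 l mem_cons_self).1] at h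
  | l :: L, m :: M, hL, hM, h => by
    have hlm := hM.le_head (hL.1 l mem_cons_self) (h ▸ prefix_append l L.flatten)
    have hml := hL.le_head (hM.1 m mem_cons_self) (h ▸ prefix_append m M.flatten)
    obtain rfl := le_antisymm hlm hml
    rw [flatten_cons, flatten_cons, append_cancel_left_eq] at h
    rw [eq_of_flatten_eq ⟨fun l' hl' => hL.1 l' (mem_cons_of_mem l hl'), hL.2.tail⟩
      ⟨fun m' hm' => hM.1 m' (mem_cons_of_mem l hm'), hM.2.tail⟩ h]

end

theorem lyndon_factorization_exists_unique_general {α : Type*} [LinearOrder α]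
    (w : List α) :
    ∃! L : List (List α),
      (∀ l ∈ L, IsLyndon l) ∧
      L.Chain' (fun a b => ¬ List.Lex (· < ·) a b) ∧
      L.flatten = w := by
  simp only [List.lex_lt, not_lt]
  obtain ⟨L, ⟨hL, hchain⟩, rfl⟩ := exists_isLyndonFactorization w
  exact ⟨L, ⟨hL, hchain, rfl⟩, fun M ⟨hM, hMchain, hflat⟩ =>
    IsLyndonFactorization.eq_of_flatten_eq ⟨hM, hMchain⟩ ⟨hL, hchain⟩ hflat⟩

/-- Every nonempty word over a totally ordered alphabet has a unique factorization
`w = l₁ l₂ ⋯ lₙ` into Lyndon words with `l₁ ≥ l₂ ≥ ⋯ ≥ lₙ` in the lexicographic order. -/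
theorem lyndon_factorization_exists_unique {α : Type*} [LinearOrder α]
    (w : List α) (hw : w ≠ []) :
    ∃! L : List (List α),
      (∀ l ∈ L, IsLyndon l) ∧
      L.Chain' (fun a b => ¬ List.Lex (· < ·) a b) ∧
      L.flatten = w :=
  lyndon_factorization_exists_unique_general w
end

section
/- For an r×r matrix B with entries in a commutative ring of formal power series, the inverse of det(I - B) equals the sum over all nonnegative-integer flows f on the complete directed graph on r vertices of β(f)·mult(f), where β(f) = ∏_e b_e^{f(e)} and mult(f) = ∏_v multinomial coefficient of the values of f on edges leaving v. -/
/-!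
Write `A = 1 - B` and `F` for the flow series. Over a torsion-free ring a power series is
determined by its constant term and its partial derivatives, so it suffices that
`∂_{kl} (det A * F) = 0`. Jacobi's formula gives `∂_{kl} det A = -adj(A)_{lk}`.

Grade monomials `x^d` by the net outflow of `d` at each vertex; then `F` is the degree-zero
part of `M = ∑_d mult(d) x^d`. The derivative `∂_{kl} M = ∑_d (outdeg_k(d) + 1) mult(d) x^d`
is a series `Q_k` independent of `l`, and Pascal's recursion for multinomials shows that
`(1 - ∑_j x_{lj}) Q_k` is `M` when `l = k` and is supported on monomials with empty row `l`
otherwise. Taking graded parts, the matrix `N_{jk} = ∂_{kj} F` satisfies `A N = F • 1`, hence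
`det A * ∂_{kl} F = F * adj(A)_{lk}` and the two terms of `∂_{kl} (det A * F)` cancel.
-/

open Finset MvPowerSeries

theorem Derivation.leibniz_prod {R A M : Type*} [CommSemiring R] [CommSemiring A] [Algebra R A]
    [AddCommMonoid M] [Module A M] [Module R M] [IsScalarTower R A M]
    (D : Derivation R A M) {ι : Type*} [DecidableEq ι] (s : Finset ι) (f : ι → A) :
    D (∏ i ∈ s, f i) = ∑ i ∈ s, (∏ j ∈ s.erase i, f j) • D (f i) := by
  induction s using Finset.induction_on with
  | empty => simp
  | insert a s ha ih =>
    rw [prod_insert ha, D.leibniz, ih, sum_insert ha, erase_insert ha, smul_sum, add_comm]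
    congr 1
    refine sum_congr rfl fun i hi => ?_
    rw [erase_insert_of_ne (ne_of_mem_of_not_mem hi ha).symm,
      prod_insert fun h => ha (mem_of_mem_erase h), smul_smul]

theorem Matrix.det_updateCol_eq_sum_adjugate {n A : Type*} [Fintype n] [DecidableEq n]
    [CommRing A] (M : Matrix n n A) (j : n) (c : n → A) :
    (M.updateCol j c).det = ∑ i, M.adjugate j i * c i := by
  rw [← cramer_apply, cramer_eq_adjugate_mulVec]; rfl

theorem Derivation.map_det {R A : Type*} [CommSemiring R] [CommRing A] [Algebra R A]
    (D : Derivation R A A) {n : Type*} [Fintype n] [DecidableEq n] (M : Matrix n n A) :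
    D M.det = ∑ i, ∑ j, M.adjugate j i * D (M i j) := by
  rw [sum_comm]
  simp_rw [← Matrix.det_updateCol_eq_sum_adjugate, Matrix.det_apply, map_sum, sum_comm (γ := n)]
  refine sum_congr rfl fun τ _ => ?_
  rw [Units.smul_def, map_zsmul, D.leibniz_prod, smul_sum]
  refine sum_congr rfl fun j _ => ?_
  rw [Units.smul_def, ← mul_prod_erase _ _ (mem_univ j), Matrix.updateCol_self, smul_eq_mul,
    mul_comm]
  congr 2
  exact prod_congr rfl fun i hi => (Matrix.updateCol_ne (ne_of_mem_erase hi)).symm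

namespace MvPowerSeries

variable {σ R G : Type*} [CommSemiring R] [AddCommGroup G] [DecidableEq G] (w : σ → G)

noncomputable def weightedHomogeneousPart (v : G) :
    MvPowerSeries σ R →ₗ[R] MvPowerSeries σ R where
  toFun φ d := if Finsupp.weight w d = v then coeff d φ else 0
  map_add' φ ψ := by
    ext d
    change ite _ (coeff d (φ + ψ)) 0 = ite _ (coeff d φ) 0 + ite _ (coeff d ψ) 0
    split_ifs <;> simp
  map_smul' c φ := by
    ext d
    change ite _ (coeff d (c • φ)) 0 = c • ite _ (coeff d φ) 0
    split_ifs <;> simp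

theorem coeff_weightedHomogeneousPart (v : G) (φ : MvPowerSeries σ R) (d : σ →₀ ℕ) :
    coeff d (weightedHomogeneousPart w v φ) =
      if Finsupp.weight w d = v then coeff d φ else 0 := rfl

theorem coeff_X_mul (s : σ) (φ : MvPowerSeries σ R) (d : σ →₀ ℕ) :
    coeff d (X s * φ) =
      if Finsupp.single s 1 ≤ d then coeff (d - Finsupp.single s 1) φ else 0 := by
  rw [X_def, coeff_monomial_mul, one_mul]

theorem weightedHomogeneousPart_add_X_mul (v : G) (s : σ) (φ : MvPowerSeries σ R) :
    weightedHomogeneousPart w (v + w s) (X s * φ) = X s * weightedHomogeneousPart w v φ := by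
  ext d
  rw [coeff_weightedHomogeneousPart, coeff_X_mul, coeff_X_mul, coeff_weightedHomogeneousPart]
  by_cases h : Finsupp.single s 1 ≤ d
  · have hw : Finsupp.weight w d = Finsupp.weight w (d - Finsupp.single s 1) + w s := by
      conv_lhs => rw [← tsub_add_cancel_of_le h]
      rw [map_add, Finsupp.weight_single, one_smul]
    simp only [if_pos h, hw, add_left_inj]
  · simp only [if_neg h, ite_self]

theorem pderiv_weightedHomogeneousPart (v : G) (s : σ) (φ : MvPowerSeries σ R) :
    pderiv R s (weightedHomogeneousPart w v φ) =
      weightedHomogeneousPart w (v - w s) (pderiv R s φ) := by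
  ext d
  simp only [coeff_pderiv, coeff_weightedHomogeneousPart, map_add, Finsupp.weight_single,
    one_smul, eq_sub_iff_add_eq]
  split_ifs <;> simp

end MvPowerSeries

theorem Nat.succ_mul_multinomial_update {α : Type*} [DecidableEq α] {s : Finset α} {a : α}
    (ha : a ∈ s) (f : α → ℕ) :
    (f a + 1) * Nat.multinomial s (Function.update f a (f a + 1)) =
      (∑ i ∈ s, f i + 1) * Nat.multinomial s f := by
  rw [← insert_erase ha, Nat.multinomial_insert (notMem_erase a s),
    Nat.multinomial_insert (notMem_erase a s), sum_insert (notMem_erase a s),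
    Nat.multinomial_congr (g := f) fun i hi => Function.update_of_ne (ne_of_mem_erase hi) _ _,
    sum_congr rfl fun i hi => Function.update_of_ne (ne_of_mem_erase hi) (f a + 1) f,
    Function.update_self, ← mul_assoc, ← mul_assoc, mul_comm (f a + 1), add_right_comm,
    Nat.add_one_mul_choose_eq]

namespace FoataZeilberger

variable {V : Type*} [DecidableEq V]

/-- `Finsupp.weight incidence d` is the net outflow of `d` at each vertex, so the flows are the
monomials of weight zero. -/
def incidence (e : V × V) : V → ℤ := Pi.single e.1 1 - Pi.single e.2 1

theorem incidence_self (k : V) : incidence (k, k) = 0 := sub_self _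

theorem neg_incidence (k l : V) : -incidence (k, l) = incidence (l, k) := neg_sub _ _

theorem incidence_add_incidence (i j k : V) :
    incidence (i, j) + incidence (j, k) = incidence (i, k) := sub_add_sub_cancel _ _ _

def row (d : V × V →₀ ℕ) (i : V) : V → ℕ := fun j => d (i, j)

theorem row_add_single (d : V × V →₀ ℕ) (k l : V) :
    row (d + Finsupp.single (k, l) 1) =
      Function.update (row d) k (Function.update (row d k) l (row d k l + 1)) := by
  ext i j
  rcases eq_or_ne i k with rfl | hi <;> rcases eq_or_ne j l with rfl | hj <;>
    simp [row, *]

variable [Fintype V]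

def flowMult (d : V × V →₀ ℕ) : ℕ := ∏ i, Nat.multinomial univ (row d i)

theorem sum_row_add_single (d : V × V →₀ ℕ) (k l i : V) :
    ∑ j, row (d + Finsupp.single (k, l) 1) i j = ∑ j, row d i j + if i = k then 1 else 0 := by
  rw [row_add_single]
  by_cases hi : i = k
  · rw [hi, Function.update_self, if_pos rfl, sum_update_of_mem (mem_univ l),
      sdiff_singleton_eq_erase, ← add_sum_erase _ _ (mem_univ l)]
    ring
  · simp only [Function.update_of_ne hi, if_neg hi, add_zero]

theorem flowMult_add_single (d : V × V →₀ ℕ) (k l : V) :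
    (row d k l + 1) * flowMult (d + Finsupp.single (k, l) 1) =
      (∑ j, row d k j + 1) * flowMult d := by
  rw [flowMult, flowMult, row_add_single, ← mul_prod_erase _ _ (mem_univ k),
    ← mul_prod_erase _ _ (mem_univ k), Function.update_self, ← mul_assoc,
    Nat.succ_mul_multinomial_update (mem_univ l), mul_assoc]
  congr 2
  exact prod_congr rfl fun i hi => by rw [Function.update_of_ne (ne_of_mem_erase hi)]

theorem sum_row_mul_flowMult_sub_single (d : V × V →₀ ℕ) (l j : V) :
    (∑ j', row d l j') *
        (if Finsupp.single (l, j) 1 ≤ d then flowMult (d - Finsupp.single (l, j) 1) else 0) =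
      d (l, j) * flowMult d := by
  split_ifs with h
  · obtain ⟨d', rfl⟩ := le_iff_exists_add'.1 h
    rw [add_tsub_cancel_right, sum_row_add_single, if_pos rfl, ← flowMult_add_single _ l j]
    simp [row]
  · rw [Finsupp.single_le_iff, not_le, Nat.lt_one_iff] at h
    rw [h, mul_zero, zero_mul]

theorem sum_flowMult_sub_single (d : V × V →₀ ℕ) (l : V) :
    ∑ j, (if Finsupp.single (l, j) 1 ≤ d then flowMult (d - Finsupp.single (l, j) 1) else 0) =
      if ∑ j, row d l j = 0 then 0 else flowMult d := by
  split_ifs with h0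
  · refine sum_eq_zero fun j _ => if_neg ?_
    rw [Finsupp.single_le_iff, not_le, Nat.lt_one_iff]
    exact sum_eq_zero_iff.1 h0 j (mem_univ j)
  · refine Nat.eq_of_mul_eq_mul_left (Nat.pos_of_ne_zero h0) ?_
    simp_rw [mul_sum, sum_row_mul_flowMult_sub_single, ← sum_mul]
    rfl

theorem weight_incidence_apply (d : V × V →₀ ℕ) (v : V) :
    Finsupp.weight incidence d v = ∑ j, (d (v, j) : ℤ) - ∑ j, (d (j, v) : ℤ) := by
  rw [Finsupp.weight_eq_sum, Finset.sum_apply, Fintype.sum_prod_type]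
  simp [incidence, Pi.single_apply, mul_sub, sum_sub_distrib]

theorem weight_incidence_eq_zero_iff (d : V × V →₀ ℕ) :
    Finsupp.weight incidence d = 0 ↔ ∀ i, ∑ j, d (i, j) = ∑ j, d (j, i) := by
  simp only [funext_iff, weight_incidence_apply, Pi.zero_apply, sub_eq_zero]
  exact_mod_cast Iff.rfl

theorem sum_row_ne_zero_of_weight_incidence_eq {d : V × V →₀ ℕ} {k l : V}
    (hd : Finsupp.weight incidence d = incidence (l, k)) (hlk : l ≠ k) :
    ∑ j, row d l j ≠ 0 := by
  intro h0
  have h := congrFun hd l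
  rw [weight_incidence_apply] at h
  have hrow : ∑ j, (d (l, j) : ℤ) = 0 := by exact_mod_cast h0
  have hcol : 0 ≤ ∑ j, (d (j, l) : ℤ) := sum_nonneg fun _ _ => Nat.cast_nonneg _
  simp [incidence, hlk] at h
  omega

variable (V) (R : Type*) [CommRing R]

noncomputable def multSeries : MvPowerSeries (V × V) R := fun d => (flowMult d : R)

noncomputable def rowMultSeries (k : V) : MvPowerSeries (V × V) R :=
  fun d => ((∑ j, row d k j + 1) * flowMult d : ℕ)

noncomputable def flowSeries : MvPowerSeries (V × V) R :=
  weightedHomogeneousPart incidence 0 (multSeries V R)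

variable {V R}

theorem coeff_flowSeries (d : V × V →₀ ℕ) :
    coeff d (flowSeries V R) =
      if ∀ i, ∑ j, d (i, j) = ∑ j, d (j, i) then
        ∏ i, (Nat.multinomial univ (fun j => d (i, j)) : R)
      else 0 := by
  rw [flowSeries, coeff_weightedHomogeneousPart]
  simp only [weight_incidence_eq_zero_iff]
  change ite _ ((flowMult d : ℕ) : R) _ = _
  rw [flowMult, Nat.cast_prod]
  rfl

theorem pderiv_multSeries (k l : V) : pderiv R (k, l) (multSeries V R) = rowMultSeries V R k := by
  ext d
  rw [coeff_pderiv]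
  change ((flowMult (d + Finsupp.single (k, l) 1) : ℕ) : R) * ((row d k l : R) + 1) =
    (((∑ j, row d k j + 1) * flowMult d : ℕ) : R)
  rw [← flowMult_add_single]
  push_cast
  ring

theorem pderiv_flowSeries (k l : V) :
    pderiv R (k, l) (flowSeries V R) =
      weightedHomogeneousPart incidence (incidence (l, k)) (rowMultSeries V R k) := by
  rw [flowSeries, pderiv_weightedHomogeneousPart, pderiv_multSeries, zero_sub, neg_incidence]

theorem coeff_X_mul_rowMultSeries (d : V × V →₀ ℕ) (k l j : V) :
    coeff d (X (l, j) * rowMultSeries V R k) =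
      (((∑ j', row d k j' + 1 : ℕ) : R) - if k = l then 1 else 0) *
        ((if Finsupp.single (l, j) 1 ≤ d then flowMult (d - Finsupp.single (l, j) 1)
          else 0 : ℕ) : R) := by
  rw [coeff_X_mul]
  by_cases h : Finsupp.single (l, j) 1 ≤ d
  · obtain ⟨d', rfl⟩ := le_iff_exists_add'.1 h
    rw [if_pos h, if_pos h, add_tsub_cancel_right, sum_row_add_single]
    change (((∑ j', row d' k j' + 1) * flowMult d' : ℕ) : R) = _
    split_ifs <;> push_cast <;> ring
  · simp [h]

theorem coeff_one_sub_sum_X_mul_rowMultSeries (d : V × V →₀ ℕ) (k l : V) :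
    coeff d ((1 - ∑ j, X (l, j)) * rowMultSeries V R k) =
      (((∑ j, row d k j + 1) * flowMult d : ℕ) : R) -
        (((∑ j, row d k j + 1 : ℕ) : R) - if k = l then 1 else 0) *
          ((if ∑ j, row d l j = 0 then 0 else flowMult d : ℕ) : R) := by
  rw [sub_mul, one_mul, map_sub, sum_mul, map_sum]
  simp_rw [coeff_X_mul_rowMultSeries, ← mul_sum, ← Nat.cast_sum, sum_flowMult_sub_single]
  rfl

theorem one_sub_sum_X_mul_rowMultSeries_self (k : V) :
    (1 - ∑ j, X (k, j)) * rowMultSeries V R k = multSeries V R := by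
  ext d
  rw [coeff_one_sub_sum_X_mul_rowMultSeries, if_pos rfl]
  change _ = (flowMult d : R)
  split_ifs with h <;> push_cast [h] <;> ring

theorem weightedHomogeneousPart_one_sub_sum_X_mul_rowMultSeries_of_ne {k l : V} (hlk : l ≠ k) :
    weightedHomogeneousPart incidence (incidence (l, k))
      ((1 - ∑ j, X (l, j)) * rowMultSeries V R k) = 0 := by
  ext d
  rw [coeff_weightedHomogeneousPart, map_zero]
  split_ifs with hd
  · rw [coeff_one_sub_sum_X_mul_rowMultSeries, if_neg hlk.symm,
      if_neg (sum_row_ne_zero_of_weight_incidence_eq hd hlk)]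
    push_cast
    ring
  · rfl

variable (V R) in
noncomputable def genericMatrix : Matrix V V (MvPowerSeries (V × V) R) :=
  Matrix.of fun i j => X (i, j)

theorem pderiv_det_one_sub_genericMatrix (k l : V) :
    pderiv R (k, l) (1 - genericMatrix V R).det = -(1 - genericMatrix V R).adjugate l k := by
  rw [Derivation.map_det]
  simp [genericMatrix, Matrix.one_apply, pderiv_X, apply_ite, Pi.single_apply, ite_and]

theorem one_sub_genericMatrix_mul_pderiv_flowSeries :
    (1 - genericMatrix V R) * Matrix.of (fun j k => pderiv R (k, j) (flowSeries V R)) =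
      flowSeries V R • 1 := by
  ext l k : 2
  have hX (j : V) :
      X (l, j) * weightedHomogeneousPart incidence (incidence (j, k)) (rowMultSeries V R k) =
        weightedHomogeneousPart incidence (incidence (l, k)) (X (l, j) * rowMultSeries V R k) := by
    rw [← weightedHomogeneousPart_add_X_mul, add_comm, incidence_add_incidence]
  simp only [Matrix.mul_apply, Matrix.sub_apply, sub_mul, sum_sub_distrib, Matrix.one_apply,
    ite_mul, one_mul, zero_mul, sum_ite_eq, mem_univ, if_true, Matrix.of_apply, genericMatrix,
    pderiv_flowSeries, hX]
  rw [← map_sum, ← map_sub, ← sum_mul, ← one_sub_mul, Matrix.smul_apply]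
  rcases eq_or_ne l k with rfl | hlk
  · rw [incidence_self, one_sub_sum_X_mul_rowMultSeries_self, Matrix.one_apply_eq, smul_eq_mul,
      mul_one, flowSeries]
  · rw [weightedHomogeneousPart_one_sub_sum_X_mul_rowMultSeries_of_ne hlk,
      Matrix.one_apply_ne hlk, smul_zero]

theorem det_mul_pderiv_flowSeries (k l : V) :
    (1 - genericMatrix V R).det * pderiv R (k, l) (flowSeries V R) =
      flowSeries V R * (1 - genericMatrix V R).adjugate l k := by
  have h := congrArg ((1 - genericMatrix V R).adjugate * ·)
    (one_sub_genericMatrix_mul_pderiv_flowSeries (V := V) (R := R))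
  simp only [← Matrix.mul_assoc, Matrix.adjugate_mul, Matrix.smul_mul, Matrix.one_mul,
    Matrix.mul_smul, Matrix.mul_one] at h
  simpa using congrFun (congrFun h l) k

theorem constantCoeff_det_one_sub_genericMatrix :
    constantCoeff (1 - genericMatrix V R).det = 1 := by
  have h : (constantCoeff (σ := V × V) (R := R)).mapMatrix (1 - genericMatrix V R) = 1 := by
    ext i j
    simp [genericMatrix, Matrix.one_apply]
  rw [RingHom.map_det, h, Matrix.det_one]

theorem constantCoeff_flowSeries : constantCoeff (flowSeries V R) = 1 := by
  rw [← coeff_zero_eq_constantCoeff_apply, flowSeries, coeff_weightedHomogeneousPart, map_zero,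
    if_pos rfl]
  change ((flowMult 0 : ℕ) : R) = 1
  simp [flowMult, row, Nat.multinomial]

theorem det_one_sub_genericMatrix_mul_flowSeries [IsAddTorsionFree R] :
    (1 - genericMatrix V R).det * flowSeries V R = 1 := by
  refine pderiv.ext (fun ⟨k, l⟩ => ?_) ?_
  · rw [pderiv_one, Derivation.leibniz, smul_eq_mul, smul_eq_mul, det_mul_pderiv_flowSeries,
      pderiv_det_one_sub_genericMatrix]
    ring
  · rw [map_mul, constantCoeff_det_one_sub_genericMatrix, constantCoeff_flowSeries, mul_one,
      map_one]

end FoataZeilberger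

/-- Foata–Zeilberger: for the generic `r × r` matrix `B = (b_{ij})` of formal variables,
`1/det(I - B)` is the sum over all nonnegative-integer flows `f` on the complete digraph
on `r` vertices of `β(f)·mult(f)`, where `β(f) = ∏_e b_e^{f(e)}` and `mult(f)` is the
product over vertices of the multinomial coefficients of the outgoing values of `f`.
Equivalently, the formal power series whose coefficient at a monomial `d` is `mult(d)`
if `d` is a flow and `0` otherwise is the inverse of `det(I - B)`. -/
theorem foata_zeilberger_det_inverse_eq_sum_over_flows (r : ℕ) :
    let B : Matrix (Fin r) (Fin r) (MvPowerSeries (Fin r × Fin r) ℚ) :=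
      fun i j => MvPowerSeries.X (i, j)
    let flowSum : MvPowerSeries (Fin r × Fin r) ℚ :=
      fun d => if (∀ i : Fin r, ∑ j : Fin r, d (i, j) = ∑ j : Fin r, d (j, i)) then
        ∏ i : Fin r, (Nat.multinomial Finset.univ (fun j : Fin r => d (i, j)) : ℚ)
      else 0
    Matrix.det (1 - B) * flowSum = 1 := by
  intro B flowSum
  have hF : flowSum = FoataZeilberger.flowSeries (Fin r) ℚ := by
    ext d
    rw [FoataZeilberger.coeff_flowSeries]
    -- the two conditions carry different `Decidable` instances
    change ite _ _ _ = _
    congr 1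
  rw [hF]
  exact FoataZeilberger.det_one_sub_genericMatrix_mul_flowSeries
end

section
/- The map sending a word w over the alphabet {1,...,r} to the flow f_w on the complete digraph K_r, where f_w(i,j) counts positions at which the nondecreasing rearrangement of w has letter i and w has letter j, is a surjection onto the set of flows; moreover for each flow γ the fiber over γ has exactly mult(γ) elements. -/
/-!
Sorting `w` gives the word `1^{c₁} 2^{c₂} ⋯ r^{c_r}`, where `c_i` is the number of `i`s in `w`.
Cutting `w` into consecutive blocks `b₁, …, b_r` of lengths `c₁, …, c_r`, the value `f_w(i, j)` is
the number of `j`s in the block `b_i`. The flow condition at `i` says exactly that the length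
`∑_j γ(i, j)` of block `i` is the number `∑_j γ(j, i)` of `i`s in the concatenation of the blocks,
so `w ↦ (b_i)_i` identifies the fibre over a flow `γ` with the product over `i` of the sets of
words having `γ(i, j)` letters `j`. There are `multinomial((γ(i, j))_j)` such words: removing the
first letter shows that the number of words with `m_a` letters `a`, times `∏ m_a!`, satisfies the
recursion `N! = ∑_a m_a (N - 1)!` of `N! = (∑ m_a)!`.
-/

/-- `fw w (i,j)` counts the positions at which the nondecreasing rearrangement of `w`
has letter `i` while `w` itself has letter `j`. -/
def fw {r : ℕ} (w : List (Fin r)) (e : Fin r × Fin r) : ℕ :=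
  ((w.insertionSort (· ≤ ·)).zip w).count e

/-- A flow on the complete digraph `K_r`: at every vertex the outgoing values sum to
the incoming values. -/
def IsFlowKr {r : ℕ} (γ : Fin r × Fin r → ℕ) : Prop :=
  ∀ i : Fin r, ∑ j : Fin r, γ (i, j) = ∑ j : Fin r, γ (j, i)

open Finset List
open scoped Nat

variable {α β : Type*}

namespace List

theorem length_eq_sum_count [Fintype α] [DecidableEq α] (l : List α) :
    l.length = ∑ a, l.count a := by
  simpa using (Multiset.sum_count_eq_card (s := univ) (m := (l : Multiset α)) (by simp)).symm

theorem sum_count_mk_eq_count_map_fst [DecidableEq α] [DecidableEq β] [Fintype β]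
    (L : List (α × β)) (a : α) : ∑ b, L.count (a, b) = (L.map Prod.fst).count a := by
  induction L with
  | nil => simp
  | cons p L ih =>
    simp only [count_cons, sum_add_distrib, ih, map_cons, beq_iff_eq, Prod.ext_iff]
    by_cases h : p.1 = a <;> simp [h]

theorem sum_count_mk_eq_count_map_snd [DecidableEq α] [DecidableEq β] [Fintype α]
    (L : List (α × β)) (b : β) : ∑ a, L.count (a, b) = (L.map Prod.snd).count b := by
  rw [show L.map Prod.snd = (L.map Prod.swap).map Prod.fst by simp,
    ← sum_count_mk_eq_count_map_fst]
  exact sum_congr rfl fun a _ => (count_map_of_injective L _ Prod.swap_injective (a, b)).symm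

theorem count_map_mk [DecidableEq α] [DecidableEq β] (a a' : α) (l : List β) (b : β) :
    (l.map (Prod.mk a)).count (a', b) = if a = a' then l.count b else 0 := by
  split_ifs with h
  · subst h
    exact count_map_of_injective l _ (Prod.mk_right_injective a) b
  · exact count_eq_zero_of_not_mem (by simp [h])

theorem zip_replicate_length_left (a : α) (l : List β) :
    (replicate l.length a).zip l = l.map (Prod.mk a) := by
  induction l with
  | nil => rfl
  | cons b l ih => simp [replicate_succ, ih]

theorem count_flatten_ofFn [BEq α] {r : ℕ} (b : Fin r → List α) (a : α) :
    (ofFn b).flatten.count a = ∑ k, (b k).count a := by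
  simp [count_flatten, map_ofFn, sum_ofFn]

theorem zip_flatten_ofFn {r : ℕ} {f : Fin r → List α} {g : Fin r → List β}
    (h : ∀ k, (f k).length = (g k).length) :
    (ofFn f).flatten.zip (ofFn g).flatten = (ofFn fun k => (f k).zip (g k)).flatten := by
  induction r with
  | zero => simp
  | succ r ih => simp [ofFn_succ, zip_append (h 0), ih fun k => h k.succ]

theorem exists_flatten_ofFn_eq {r : ℕ} (c : Fin r → ℕ) (w : List α)
    (hw : w.length = ∑ k, c k) :
    ∃ b : Fin r → List α, (ofFn b).flatten = w ∧ ∀ k, (b k).length = c k := by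
  induction r generalizing w with
  | zero => exact ⟨Fin.elim0, by simpa using hw, Fin.rec0⟩
  | succ r ih =>
    rw [Fin.sum_univ_succ] at hw
    obtain ⟨b, hb, hlen⟩ := ih (Fin.tail c) (w.drop (c 0)) (by simp [hw, Fin.tail])
    refine ⟨Fin.cons (w.take (c 0)) b, by simp [ofFn_succ, hb], Fin.cases ?_ hlen⟩
    simp [hw]

theorem eq_of_flatten_ofFn_eq {r : ℕ} {b b' : Fin r → List α}
    (h : (ofFn b).flatten = (ofFn b').flatten) (hlen : ∀ k, (b k).length = (b' k).length) :
    b = b' := by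
  rw [← ofFn_inj, eq_iff_flatten_eq]
  simpa [map_ofFn, Function.comp_def, hlen] using h

def subtypeEquivSigmaCons (P : List α → Prop) (hP : ¬ P []) :
    {l // P l} ≃ Σ a, {t // P (a :: t)} where
  toFun
    | ⟨[], h⟩ => absurd h hP
    | ⟨a :: t, h⟩ => ⟨a, t, h⟩
  invFun x := ⟨x.1 :: x.2.1, x.2.2⟩
  left_inv
    | ⟨[], h⟩ => absurd h hP
    | ⟨_ :: _, _⟩ => rfl
  right_inv _ := rfl

end List

theorem card_subtype_cons_count_eq [DecidableEq α] {m : α → ℕ} {a : α} (ha : m a ≠ 0) :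
    Nat.card {t : List α // ∀ b, (a :: t).count b = m b} =
      Nat.card {t : List α // ∀ b, t.count b = Function.update m a (m a - 1) b} :=
  Nat.card_congr <| Equiv.subtypeEquivRight fun t => forall_congr' fun b => by
    by_cases hb : b = a
    · subst hb
      simp
      omega
    · simp [hb, Ne.symm hb]

section WordsWithCounts

variable [Fintype α] [DecidableEq α]

theorem prod_factorial_eq_mul_prod_factorial_update {m : α → ℕ} {a : α} (ha : m a ≠ 0) :
    ∏ b, (m b)! = m a * ∏ b, (Function.update m a (m a - 1) b)! := by
  simp_rw [Function.apply_update (fun _ n => n !), prod_update_of_mem (mem_univ a),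
    prod_eq_mul_prod_sdiff_singleton_of_mem (mem_univ a), ← mul_assoc, Nat.mul_factorial_pred ha]

theorem sum_update_pred {m : α → ℕ} {a : α} (ha : m a ≠ 0) :
    ∑ b, Function.update m a (m a - 1) b = ∑ b, m b - 1 := by
  rw [sum_update_of_mem (mem_univ a), sum_eq_add_sum_sdiff_singleton_of_mem (mem_univ a) m]
  omega

theorem finite_subtype_count_eq (m : α → ℕ) : Finite {l : List α // ∀ a, l.count a = m a} :=
  ((finite_length_eq α (∑ a, m a)).subset fun l hl => by
    simp [length_eq_sum_count, show ∀ a, l.count a = m a from hl]).to_subtype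

theorem card_subtype_count_eq_mul_prod_factorial (m : α → ℕ) :
    Nat.card {l : List α // ∀ a, l.count a = m a} * ∏ a, (m a)! = (∑ a, m a)! := by
  induction h : ∑ a, m a generalizing m with
  | zero =>
    obtain rfl : m = 0 := funext fun a => sum_eq_zero_iff.mp h a (mem_univ a)
    have : Unique {l : List α // ∀ a, l.count a = 0} :=
      ⟨⟨[], by simp⟩, fun ⟨l, hl⟩ => Subtype.ext <| eq_nil_of_length_eq_zero <| by
        simp [length_eq_sum_count, hl]⟩
    simp
  | succ n ih =>
    have key (a : α) :
        Nat.card {t : List α // ∀ b, (a :: t).count b = m b} * ∏ b, (m b)! = m a * n ! := by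
      by_cases ha : m a = 0
      · have : IsEmpty {t : List α // ∀ b, (a :: t).count b = m b} :=
          ⟨fun ⟨t, ht⟩ => by simpa [ha] using ht a⟩
        simp [ha]
      rw [card_subtype_cons_count_eq ha, prod_factorial_eq_mul_prod_factorial_update ha,
        mul_left_comm, ih _ (by rw [sum_update_pred ha, h, Nat.add_sub_cancel])]
    have hnil : ¬ ∀ a, ([] : List α).count a = m a := fun h0 => by simp [← h0] at h
    have (a : α) : Finite {t : List α // ∀ b, (a :: t).count b = m b} :=
      have := finite_subtype_count_eq m
      Finite.of_injective (fun t => (⟨a :: t.1, t.2⟩ : {l : List α // ∀ b, l.count b = m b}))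
        fun t t' htt' => Subtype.ext (cons_injective (congrArg Subtype.val htt'))
    rw [Nat.card_congr (subtypeEquivSigmaCons _ hnil), Nat.card_sigma, sum_mul,
      sum_congr rfl fun a _ => key a, ← sum_mul, h, Nat.factorial_succ]

theorem card_subtype_count_eq (m : α → ℕ) :
    Nat.card {l : List α // ∀ a, l.count a = m a} = Nat.multinomial univ m :=
  Nat.eq_of_mul_eq_mul_left (Nat.prod_factorial_pos univ m) <| by
    rw [Nat.multinomial_spec, mul_comm, card_subtype_count_eq_mul_prod_factorial]

end WordsWithCounts

section WordToFlow

variable {r : ℕ}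

theorem insertionSort_eq_flatten_ofFn_replicate (w : List (Fin r)) :
    w.insertionSort (· ≤ ·) = (ofFn fun i => replicate (w.count i) i).flatten := by
  refine Perm.eq_of_pairwise' (pairwise_insertionSort _ w) ?_ ?_
  · rw [pairwise_flatten, pairwise_ofFn]
    refine ⟨fun l hl => ?_, fun i j hij x hx y hy => ?_⟩
    · obtain ⟨i, rfl⟩ := mem_ofFn.mp hl
      exact pairwise_replicate.mpr (Or.inr le_rfl)
    · rw [eq_of_mem_replicate hx, eq_of_mem_replicate hy]
      exact hij.le
  · refine (perm_insertionSort _ w).trans (perm_iff_count.mpr fun a => ?_)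
    simp [count_flatten_ofFn, count_replicate]

theorem isFlowKr_fw (w : List (Fin r)) : IsFlowKr (fw w) := by
  intro i
  have hperm := perm_insertionSort (· ≤ ·) w
  simp only [fw, sum_count_mk_eq_count_map_fst, sum_count_mk_eq_count_map_snd,
    map_fst_zip hperm.length_eq.le, map_snd_zip hperm.length_eq.ge]
  exact hperm.count_eq i

theorem fw_flatten_ofFn (b : Fin r → List (Fin r))
    (hb : ∀ k, (b k).length = (ofFn b).flatten.count k) (i j : Fin r) :
    fw (ofFn b).flatten (i, j) = (b i).count j := by
  rw [fw, insertionSort_eq_flatten_ofFn_replicate]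
  simp only [← hb]
  rw [zip_flatten_ofFn fun k => length_replicate]
  simp [zip_replicate_length_left, count_flatten_ofFn, count_map_mk]

theorem fw_flatten_ofFn_of_isFlowKr {γ : Fin r × Fin r → ℕ} (hγ : IsFlowKr γ)
    (b : Fin r → List (Fin r)) (hb : ∀ i j, (b i).count j = γ (i, j)) :
    fw (ofFn b).flatten = γ := by
  refine funext fun ⟨i, j⟩ => (fw_flatten_ofFn b (fun k => ?_) i j).trans (hb i j)
  simp [length_eq_sum_count, count_flatten_ofFn, hb, hγ k]

theorem exists_flatten_ofFn_eq_of_fw_eq {γ : Fin r × Fin r → ℕ} {w : List (Fin r)}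
    (hw : fw w = γ) :
    ∃ b : Fin r → List (Fin r), (ofFn b).flatten = w ∧ ∀ i j, (b i).count j = γ (i, j) := by
  obtain ⟨b, rfl, hlen⟩ := exists_flatten_ofFn_eq (fun k => w.count k) w (length_eq_sum_count w)
  exact ⟨b, rfl, fun i j => by rw [← hw, fw_flatten_ofFn b hlen]⟩

def concatBlocks {γ : Fin r × Fin r → ℕ} (hγ : IsFlowKr γ)
    (b : ∀ i, {l : List (Fin r) // ∀ j, l.count j = γ (i, j)}) : {w : List (Fin r) // fw w = γ} :=
  ⟨(ofFn fun i => (b i).1).flatten, fw_flatten_ofFn_of_isFlowKr hγ _ fun i => (b i).2⟩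

theorem concatBlocks_bijective {γ : Fin r × Fin r → ℕ} (hγ : IsFlowKr γ) :
    Function.Bijective (concatBlocks hγ) := by
  refine ⟨fun b b' hbb' => ?_, fun ⟨w, hw⟩ => ?_⟩
  · have := eq_of_flatten_ofFn_eq (congrArg Subtype.val hbb') fun k => by
      simp [length_eq_sum_count, (b k).2, (b' k).2]
    exact funext fun i => Subtype.ext (congrFun this i)
  · obtain ⟨b, rfl, hb⟩ := exists_flatten_ofFn_eq_of_fw_eq hw
    exact ⟨fun i => ⟨b i, hb i⟩, rfl⟩

end WordToFlow

/-- The map `w ↦ f_w` sends every word to a flow on `K_r`, is a surjection onto the set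
of flows, and the fiber over a flow `γ` has exactly
`mult(γ) = ∏_i multinomial((γ(i,j))_j)` elements. -/
theorem word_to_flow_surjective_with_multiplicity (r : ℕ) :
    (∀ w : List (Fin r), IsFlowKr (fw w)) ∧
    (∀ γ : Fin r × Fin r → ℕ, IsFlowKr γ →
      Nat.card {w : List (Fin r) // fw w = γ} =
        ∏ i : Fin r, Nat.multinomial Finset.univ (fun j : Fin r => γ (i, j))) := by
  refine ⟨isFlowKr_fw, fun γ hγ => ?_⟩
  rw [← Nat.card_congr (Equiv.ofBijective _ (concatBlocks_bijective hγ)), Nat.card_pi]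
  exact prod_congr rfl fun i _ => card_subtype_count_eq _
end

section
/- Let S be a k-structure with blocks A_1,...,A_l and sets B_1,...,B_l. Then the sum over all v ∈ V(S,n) of ∏_{i=1}^k t^{v_i - def_1(S,v,i)} equals ∏_{i=1}^k (n - m(S,i))_t, where (m)_t = (t^m - 1)/(t - 1) denotes the quantum integer. -/
open scoped Classical
open Finset

/-- `IsKStructure A B` : the pair `S = (A, B)` is a `k`-structure with `l` blocks.
`A` is an ordered partition of `{1,…,k}` into nonempty consecutive intervals,
`B₁ = ∅`, `B_i ⊆ A_1 ∪ ⋯ ∪ A_{i-1}`, and `B` is monotonic. -/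
def IsKStructure {k l : ℕ} (A B : Fin l → Finset (Fin k)) : Prop :=
  (∀ i, (A i).Nonempty) ∧
  (∀ x : Fin k, ∃! i, x ∈ A i) ∧
  (∀ i j : Fin l, i < j → ∀ x ∈ A i, ∀ y ∈ A j, x < y) ∧
  (∀ i : Fin l, i.val = 0 → B i = ∅) ∧
  (∀ i : Fin l, ∀ x ∈ B i, ∃ j < i, x ∈ A j) ∧
  (∀ x : Fin k, ∀ i j j' : Fin l, x ∈ B j → x ∈ A i → i < j' → j' ≤ j → x ∈ B j')

/-- Extend a family of sets indexed by `Fin l` to all of `ℕ` by the empty set. -/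
def extFam {k l : ℕ} (A : Fin l → Finset (Fin k)) (j : ℕ) : Finset (Fin k) :=
  if h : j < l then A ⟨j, h⟩ else ∅

/-- The index of the block of the partition `A` containing `x`. -/
noncomputable def blockOf {k l : ℕ} (A : Fin l → Finset (Fin k)) (x : Fin k) : ℕ :=
  sInf {i : ℕ | x ∈ extFam A i}

/-- `A_x ∪ B_x` where `A_x` is the block containing `i`. -/
noncomputable def blockUnion {k l : ℕ} (A B : Fin l → Finset (Fin k)) (i : Fin k) :
    Finset (Fin k) :=
  extFam A (blockOf A i) ∪ extFam B (blockOf A i)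

/-- `m(S,i)` : the number of `j ∈ A_x ∪ B_x` with `j < i`, where `i ∈ A_x`. -/
noncomputable def mS {k l : ℕ} (A B : Fin l → Finset (Fin k)) (i : Fin k) : ℕ :=
  ((blockUnion A B i).filter (fun j => j < i)).card

/-- `def₁(S,v,i)` : the number of `j ∈ A_x ∪ B_x` with `j < i` and `v j < v i`. -/
noncomputable def def1 {k l n : ℕ} (A B : Fin l → Finset (Fin k))
    (v : Fin k → Fin n) (i : Fin k) : ℕ :=
  ((blockUnion A B i).filter (fun j => j < i ∧ v j < v i)).card

/-- membership in `V(S,n)` : `v` takes distinct values on each set `A_m ∪ B_m`. -/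
def memV {k l n : ℕ} (A B : Fin l → Finset (Fin k)) (v : Fin k → Fin n) : Prop :=
  ∀ m : Fin l, ∀ i ∈ A m ∪ B m, ∀ j ∈ A m ∪ B m, i ≠ j → v i ≠ v j

/-- The quantum integer `(m)_t = 1 + t + ⋯ + t^{m-1}`. -/
def qint {R : Type*} [CommSemiring R] (t : R) (m : ℕ) : R :=
  ∑ j ∈ Finset.range m, t ^ j

lemma sum_rank {n : ℕ} {R : Type*} [CommRing R] (t : R) (G : Finset (Fin n)) :
    ∑ a ∈ G, t ^ ((G.filter (fun b => b < a)).card) = qint t G.card := by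
  induction G using Finset.strongInduction with
  | _ G ih =>
  rcases G.eq_empty_or_nonempty with rfl | hne
  · simp [qint]
  ·
    set a0 := G.max' hne with ha0
    have ha0G : a0 ∈ G := G.max'_mem hne
    have hcard : G.card = (G.erase a0).card + 1 := by
      rw [Finset.card_erase_of_mem ha0G]
      have := Finset.card_pos.mpr hne
      omega
    have hfilt : G.filter (fun b => b < a0) = G.erase a0 := by
      ext b
      simp only [mem_filter, mem_erase]
      constructor
      · rintro ⟨hb, hlt⟩; exact ⟨ne_of_lt hlt, hb⟩
      · rintro ⟨hne', hb⟩
        exact ⟨hb, lt_of_le_of_ne (G.le_max' b hb) hne'⟩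
    rw [← Finset.add_sum_erase _ _ ha0G]
    have hrest : ∀ a ∈ G.erase a0,
        t ^ ((G.filter (fun b => b < a)).card)
        = t ^ (((G.erase a0).filter (fun b => b < a)).card) := by
      intro a haa
      congr 2
      ext b
      simp only [mem_filter, mem_erase]
      constructor
      · rintro ⟨hb, hlt⟩
        refine ⟨⟨?_, hb⟩, hlt⟩
        rintro rfl
        exact absurd (G.le_max' a (Finset.mem_of_mem_erase haa)) (not_le.mpr hlt)
      · rintro ⟨⟨_, hb⟩, hlt⟩; exact ⟨hb, hlt⟩
    rw [Finset.sum_congr rfl hrest, ih _ (Finset.erase_ssubset ha0G), hfilt, hcard]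
    simp [qint, Finset.sum_range_succ, add_comm]

lemma sum_compl_rank {n : ℕ} {R : Type*} [CommRing R] (t : R) (F : Finset (Fin n)) :
    ∑ a ∈ Fᶜ, t ^ ((a : ℕ) - (F.filter (fun b => b < a)).card) = qint t (n - F.card) := by
  have key : ∀ a ∈ Fᶜ, (a : ℕ) - (F.filter (fun b => b < a)).card
      = (Fᶜ.filter (fun b => b < a)).card := by
    intro a _
    have h1 : (univ.filter (fun b : Fin n => b < a)).card = a := by
      have : univ.filter (fun b : Fin n => b < a) = Finset.Iio a := by
        ext b; simp
      rw [this, Fin.card_Iio]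
    have h2 : (univ.filter (fun b : Fin n => b < a)).card
        = (F.filter (fun b => b < a)).card + (Fᶜ.filter (fun b => b < a)).card := by
      rw [← Finset.card_union_of_disjoint
        (disjoint_compl_right.mono (Finset.filter_subset _ _) (Finset.filter_subset _ _)),
        ← Finset.filter_union, Finset.union_compl]
    omega
  rw [Finset.sum_congr rfl (fun a ha => by rw [key a ha]), sum_rank,
    Finset.card_compl, Fintype.card_fin]

lemma tele {R : Type*} [CommRing R] (t : R) (k n : ℕ) (hn : 0 < n)
    (P : Fin k → Finset (Fin k))
    (hb : ∀ i : Fin k, ∀ j ∈ P i, ∀ j' ∈ P i, j' < j → j' ∈ P j)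
    (hlt : ∀ i : Fin k, ∀ j ∈ P i, j < i) :
    ∀ r : ℕ,
      ∑ v ∈ univ.filter (fun v : Fin k → Fin n =>
          (∀ i : Fin k, (i : ℕ) < r → ∀ j ∈ P i, v j ≠ v i) ∧
          (∀ j : Fin k, r ≤ (j : ℕ) → v j = ⟨0, hn⟩)),
        ∏ i ∈ univ.filter (fun i : Fin k => (i : ℕ) < r),
          t ^ ((v i : ℕ) - ((P i).filter (fun j => v j < v i)).card)
      = ∏ i ∈ univ.filter (fun i : Fin k => (i : ℕ) < r), qint t (n - (P i).card) := by
  intro r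
  induction r with
  | zero =>
    have hset : univ.filter (fun v : Fin k → Fin n =>
        (∀ i : Fin k, (i : ℕ) < 0 → ∀ j ∈ P i, v j ≠ v i) ∧
        (∀ j : Fin k, 0 ≤ (j : ℕ) → v j = ⟨0, hn⟩)) = {fun _ => (⟨0, hn⟩ : Fin n)} := by
      ext v
      simp only [mem_filter, mem_univ, true_and, mem_singleton]
      constructor
      · rintro ⟨-, h2⟩; funext j; exact h2 j (Nat.zero_le _)
      · rintro rfl
        exact ⟨fun i hi => absurd hi (Nat.not_lt_zero _), fun j _ => rfl⟩
    have hidx : univ.filter (fun i : Fin k => (i : ℕ) < 0) = ∅ := by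
      ext i; simp
    rw [hset, hidx, Finset.sum_singleton, Finset.prod_empty, Finset.prod_empty]
  | succ r ih =>
    by_cases hr : r < k
    · set ir : Fin k := ⟨r, hr⟩ with hirdef
      set z : Fin n := ⟨0, hn⟩ with hzdef
      -- the index sets
      have hidx : univ.filter (fun i : Fin k => (i : ℕ) < r + 1)
          = insert ir (univ.filter (fun i : Fin k => (i : ℕ) < r)) := by
        ext i
        simp only [mem_filter, mem_univ, true_and, mem_insert]
        constructor
        · intro h
          rcases Nat.lt_succ_iff_lt_or_eq.mp h with h | h
          · exact Or.inr (by simpa using h)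
          · exact Or.inl (Fin.ext h)
        · rintro (rfl | h)
          · exact Nat.lt_succ_self r
          · omega
      have hirnot : ir ∉ univ.filter (fun i : Fin k => (i : ℕ) < r) := by
        simp [hirdef]
      -- maps-to for fiberwise sum
      have hmaps : ∀ v ∈ univ.filter (fun v : Fin k → Fin n =>
          (∀ i : Fin k, (i : ℕ) < r + 1 → ∀ j ∈ P i, v j ≠ v i) ∧
          (∀ j : Fin k, r + 1 ≤ (j : ℕ) → v j = z)),
          Function.update v ir z ∈ univ.filter (fun v : Fin k → Fin n =>
          (∀ i : Fin k, (i : ℕ) < r → ∀ j ∈ P i, v j ≠ v i) ∧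
          (∀ j : Fin k, r ≤ (j : ℕ) → v j = z)) := by
        intro v hv
        simp only [mem_filter, mem_univ, true_and] at hv ⊢
        obtain ⟨h1, h2⟩ := hv
        constructor
        · intro i hi j hj
          have hji : j < i := hlt i j hj
          have hij : i ≠ ir := by intro h; rw [h] at hi; exact absurd hi (lt_irrefl r)
          have hjir : j ≠ ir := by
            intro h
            have h2 : (j : ℕ) < (i : ℕ) := hji
            rw [h] at h2
            have h3 : (ir : ℕ) = r := rfl
            omega
          rw [Function.update_of_ne hij, Function.update_of_ne hjir]
          exact h1 i (by omega) j hj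
        · intro j hj
          by_cases hjir : j = ir
          · rw [hjir, Function.update_self]
          · rw [Function.update_of_ne hjir]
            apply h2
            have : (j : ℕ) ≠ r := fun h => hjir (Fin.ext h)
            omega
      rw [← Finset.sum_fiberwise_of_maps_to hmaps]
      -- compute each inner (fiber) sum
      have hinner : ∀ u ∈ univ.filter (fun v : Fin k → Fin n =>
          (∀ i : Fin k, (i : ℕ) < r → ∀ j ∈ P i, v j ≠ v i) ∧
          (∀ j : Fin k, r ≤ (j : ℕ) → v j = z)),
          (∑ v ∈ (univ.filter (fun v : Fin k → Fin n =>
              (∀ i : Fin k, (i : ℕ) < r + 1 → ∀ j ∈ P i, v j ≠ v i) ∧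
              (∀ j : Fin k, r + 1 ≤ (j : ℕ) → v j = z))).filter
              (fun v => Function.update v ir z = u),
            ∏ i ∈ univ.filter (fun i : Fin k => (i : ℕ) < r + 1),
              t ^ ((v i : ℕ) - ((P i).filter (fun j => v j < v i)).card))
          = qint t (n - (P ir).card) *
            ∏ i ∈ univ.filter (fun i : Fin k => (i : ℕ) < r),
              t ^ ((u i : ℕ) - ((P i).filter (fun j => u j < u i)).card) := by
        intro u hu
        simp only [mem_filter, mem_univ, true_and] at hu
        obtain ⟨hu1, hu2⟩ := hu
        -- u is injective on P ir
        have hinj : ∀ j ∈ P ir, ∀ j' ∈ P ir, u j = u j' → j = j' := by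
          intro j hj j' hj' heq
          by_contra hne
          rcases lt_or_gt_of_ne hne with h | h
          · have hmem : j ∈ P j' := hb ir j' hj' j hj h
            have : (j' : ℕ) < r := hlt ir j' hj'
            exact hu1 j' (by omega) j hmem heq
          · have hmem : j' ∈ P j := hb ir j hj j' hj' h
            have : (j : ℕ) < r := hlt ir j hj
            exact hu1 j (by omega) j' hmem heq.symm
        set F : Finset (Fin n) := (P ir).image u with hFdef
        have hFcard : F.card = (P ir).card :=
          Finset.card_image_of_injOn (fun x hx y hy h => hinj x hx y hy h)
        -- the fiber is the image of Fᶜ under a ↦ update u ir a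
        have hfiber : (univ.filter (fun v : Fin k → Fin n =>
              (∀ i : Fin k, (i : ℕ) < r + 1 → ∀ j ∈ P i, v j ≠ v i) ∧
              (∀ j : Fin k, r + 1 ≤ (j : ℕ) → v j = z))).filter
              (fun v => Function.update v ir z = u)
            = Fᶜ.image (fun a => Function.update u ir a) := by
          ext v
          simp only [mem_filter, mem_univ, true_and, Finset.mem_image, Finset.mem_compl]
          constructor
          · rintro ⟨⟨h1, h2⟩, h3⟩
            refine ⟨v ir, ?_, ?_⟩
            · intro hmem
              rw [hFdef, Finset.mem_image] at hmem
              obtain ⟨j, hj, hje⟩ := hmem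
              have hjne : j ≠ ir := by
                have := hlt ir j hj
                exact ne_of_lt this
              have : u j = v j := by
                rw [← h3, Function.update_of_ne hjne]
              exact h1 ir (Nat.lt_succ_self r) j hj (by rw [← this, hje])
            · funext j
              by_cases hj : j = ir
              · rw [hj, Function.update_self]
              · rw [Function.update_of_ne hj, ← h3, Function.update_of_ne hj]
          · rintro ⟨a, haF, rfl⟩
            refine ⟨⟨?_, ?_⟩, ?_⟩
            · intro i hi j hj
              have hji : j < i := hlt i j hj
              have hjne : j ≠ ir := by
                intro h
                rw [h] at hji
                have : (i : ℕ) < r + 1 := hi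
                have : r < (i : ℕ) := hji
                omega
              rw [Function.update_of_ne hjne]
              by_cases hiir : i = ir
              · subst hiir
                rw [Function.update_self]
                intro h
                apply haF
                rw [hFdef, ← h]
                exact Finset.mem_image_of_mem u hj
              · rw [Function.update_of_ne hiir]
                have : (i : ℕ) ≠ r := fun h => hiir (Fin.ext h)
                exact hu1 i (by omega) j hj
            · intro j hj
              have hjne : j ≠ ir := by
                intro h
                rw [h] at hj
                have h3 : (ir : ℕ) = r := rfl
                omega
              rw [Function.update_of_ne hjne]
              have h3 : (j : ℕ) ≠ r := fun h => hjne (Fin.ext h)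
              exact hu2 j (by omega)
            · funext j
              by_cases hj : j = ir
              · rw [hj, Function.update_self]
                exact (hu2 ir (le_of_eq rfl)).symm
              · rw [Function.update_of_ne hj, Function.update_of_ne hj]
        rw [hfiber]
        rw [Finset.sum_image (fun a _ b _ h => by
          have := congrFun h ir
          rwa [Function.update_self, Function.update_self] at this)]
        -- evaluate the weight of update u ir a
        have hweight : ∀ a ∈ Fᶜ,
            (∏ i ∈ univ.filter (fun i : Fin k => (i : ℕ) < r + 1),
              t ^ (((Function.update u ir a) i : ℕ) -
                ((P i).filter (fun j => (Function.update u ir a) j <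
                  (Function.update u ir a) i)).card))
            = t ^ ((a : ℕ) - (F.filter (fun b => b < a)).card) *
              ∏ i ∈ univ.filter (fun i : Fin k => (i : ℕ) < r),
                t ^ ((u i : ℕ) - ((P i).filter (fun j => u j < u i)).card) := by
          intro a haF
          rw [hidx, Finset.prod_insert hirnot]
          congr 1
          · -- the ir term
            have h1 : Function.update u ir a ir = a := Function.update_self _ _ _
            rw [h1]
            congr 2
            have h2 : (P ir).filter (fun j => Function.update u ir a j < a)
                = (P ir).filter (fun j => u j < a) := by
              apply Finset.filter_congr
              intro j hj
              have hjne : j ≠ ir := ne_of_lt (hlt ir j hj)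
              rw [Function.update_of_ne hjne]
            rw [h2]
            have h3 : F.filter (fun b => b < a) = ((P ir).filter (fun j => u j < a)).image u := by
              rw [hFdef, Finset.filter_image]
            rw [h3, Finset.card_image_of_injOn]
            intro x hx y hy h
            simp only [Finset.coe_filter, Set.mem_setOf_eq] at hx hy
            exact hinj x hx.1 y hy.1 h
          · apply Finset.prod_congr rfl
            intro i hi
            simp only [mem_filter, mem_univ, true_and] at hi
            have hiir : i ≠ ir := by intro h; rw [h] at hi; exact absurd hi (lt_irrefl r)
            rw [Function.update_of_ne hiir]
            congr 3
            apply Finset.filter_congr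
            intro j hj
            have hjne : j ≠ ir := by
              have h1 : (j : ℕ) < (i : ℕ) := hlt i j hj
              intro h
              rw [h] at h1
              have h3 : (ir : ℕ) = r := rfl
              omega
            rw [Function.update_of_ne hjne]
        rw [Finset.sum_congr rfl hweight, ← Finset.sum_mul, sum_compl_rank, hFcard]
      rw [Finset.sum_congr rfl hinner, ← Finset.mul_sum, ih, hidx,
        Finset.prod_insert hirnot]
    · -- r ≥ k : nothing changes
      have hidx : univ.filter (fun i : Fin k => (i : ℕ) < r + 1)
          = univ.filter (fun i : Fin k => (i : ℕ) < r) := by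
        ext i
        have := i.isLt
        simp only [mem_filter, mem_univ, true_and]
        omega
      have hset : univ.filter (fun v : Fin k → Fin n =>
          (∀ i : Fin k, (i : ℕ) < r + 1 → ∀ j ∈ P i, v j ≠ v i) ∧
          (∀ j : Fin k, r + 1 ≤ (j : ℕ) → v j = ⟨0, hn⟩))
          = univ.filter (fun v : Fin k → Fin n =>
          (∀ i : Fin k, (i : ℕ) < r → ∀ j ∈ P i, v j ≠ v i) ∧
          (∀ j : Fin k, r ≤ (j : ℕ) → v j = ⟨0, hn⟩)) := by
        ext v
        simp only [mem_filter, mem_univ, true_and]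
        constructor
        · rintro ⟨h1, h2⟩
          refine ⟨fun i hi => h1 i (by omega), fun j hj => ?_⟩
          have := j.isLt; omega
        · rintro ⟨h1, h2⟩
          refine ⟨fun i hi => h1 i (by have := i.isLt; omega), fun j hj => ?_⟩
          have := j.isLt; omega
      rw [hidx, hset, ih]

lemma blockOf_eq_aux {k l : ℕ} (A : Fin l → Finset (Fin k))
    (hu : ∀ x : Fin k, ∃! i, x ∈ A i) {x : Fin k} {y : Fin l} (hx : x ∈ A y) :
    blockOf A x = y.val := by
  have hset : {i : ℕ | x ∈ extFam A i} = {y.val} := by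
    ext i
    simp only [Set.mem_setOf_eq, Set.mem_singleton_iff, extFam]
    constructor
    · intro hi
      by_cases h : i < l
      · rw [dif_pos h] at hi
        have := (hu x).unique hi hx
        exact congrArg Fin.val this
      · rw [dif_neg h] at hi
        exact absurd hi (Finset.notMem_empty x)
    · rintro rfl
      rw [dif_pos y.isLt]
      simpa using hx
  rw [blockOf, hset, csInf_singleton]

lemma blockUnion_eq_aux {k l : ℕ} (A B : Fin l → Finset (Fin k))
    (hu : ∀ x : Fin k, ∃! i, x ∈ A i) {x : Fin k} {y : Fin l} (hx : x ∈ A y) :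
    blockUnion A B x = A y ∪ B y := by
  rw [blockUnion, blockOf_eq_aux A hu hx]
  rw [extFam, extFam, dif_pos y.isLt, dif_pos y.isLt]

lemma mem_blockUnion_of_aux {k l : ℕ} {A B : Fin l → Finset (Fin k)}
    (hS : IsKStructure A B) (m : Fin l) (i j : Fin k)
    (hi : i ∈ A m ∪ B m) (hj : j ∈ A m ∪ B m) (hji : j < i) :
    j ∈ blockUnion A B i := by
  obtain ⟨hne, hu, hord, hB1, hBsub, hmono⟩ := hS
  obtain ⟨x, hx, hxu⟩ := hu i
  rw [blockUnion_eq_aux A B hu hx]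
  rw [Finset.mem_union] at hi hj ⊢
  rcases hi with hiA | hiB
  · have hmx : m = x := hxu m hiA
    subst hmx
    exact hj
  · obtain ⟨x', hx'm, hix'⟩ := hBsub m i hiB
    have hxx : x' = x := hxu x' hix'
    subst hxx
    rcases hj with hjA | hjB
    · exact absurd (hord x' m hx'm i hx j hjA) (not_lt.mpr hji.le)
    · obtain ⟨y, hym, hjy⟩ := hBsub m j hjB
      rcases lt_trichotomy y x' with h | h | h
      · exact Or.inr (hmono j y m x' hjB hjy h hx'm.le)
      · subst h
        exact Or.inl hjy
      · exact absurd (hord x' y h i hx j hjy) (not_lt.mpr hji.le)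

/-- For a `k`-structure `S`, `∑_{v ∈ V(S,n)} ∏_i t^{v_i - def₁(S,v,i)}
 = ∏_i (n - m(S,i))_t`. -/
theorem kstructure_def1_sum {R : Type*} [CommRing R] (t : R) (k l n : ℕ)
    (A B : Fin l → Finset (Fin k)) (hS : IsKStructure A B) :
    ∑ v ∈ Finset.univ.filter (fun v : Fin k → Fin n => memV A B v),
      ∏ i : Fin k, t ^ ((v i : ℕ) - def1 A B v i)
      = ∏ i : Fin k, qint t (n - mS A B i) := by
  rcases Nat.eq_zero_or_pos n with rfl | hn
  · rcases Nat.eq_zero_or_pos k with rfl | hk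
    · have hall : ∀ v : Fin 0 → Fin 0, memV A B v := by
        intro v m i hi
        exact i.elim0
      rw [Finset.filter_true_of_mem (fun v _ => hall v)]
      simp
    · have he : IsEmpty (Fin k → Fin 0) := ⟨fun v => (v ⟨0, hk⟩).elim0⟩
      have h1 : (Finset.univ.filter (fun v : Fin k → Fin 0 => memV A B v)) = ∅ := by
        rw [Finset.univ_eq_empty, Finset.filter_empty]
      rw [h1, Finset.sum_empty]
      refine (Finset.prod_eq_zero (Finset.mem_univ (⟨0, hk⟩ : Fin k)) ?_).symm
      simp [qint]
  · have hu := hS.2.1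
    set P : Fin k → Finset (Fin k) :=
      fun i => (blockUnion A B i).filter (fun j => j < i) with hP
    have hPmem : ∀ i j : Fin k, j ∈ P i ↔ j ∈ blockUnion A B i ∧ j < i := by
      intro i j
      rw [hP]
      exact Finset.mem_filter
    have hlt : ∀ i : Fin k, ∀ j ∈ P i, j < i := fun i j hj => ((hPmem i j).mp hj).2
    have hbu : ∀ i : Fin k, ∃ x : Fin l, i ∈ A x ∧ blockUnion A B i = A x ∪ B x := by
      intro i
      obtain ⟨x, hx, -⟩ := hu i
      exact ⟨x, hx, blockUnion_eq_aux A B hu hx⟩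
    have hb : ∀ i : Fin k, ∀ j ∈ P i, ∀ j' ∈ P i, j' < j → j' ∈ P j := by
      intro i j hj j' hj' hlt'
      obtain ⟨x, hx, hbe⟩ := hbu i
      refine (hPmem j j').mpr ⟨?_, hlt'⟩
      apply mem_blockUnion_of_aux hS x j j' ?_ ?_ hlt'
      · have h := ((hPmem i j).mp hj).1
        rwa [hbe] at h
      · have h := ((hPmem i j').mp hj').1
        rwa [hbe] at h
    have hmemV : ∀ v : Fin k → Fin n,
        memV A B v ↔ (∀ i : Fin k, ∀ j ∈ P i, v j ≠ v i) := by
      intro v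
      constructor
      · intro hv i j hj
        obtain ⟨x, hx, hbe⟩ := hbu i
        obtain ⟨hj1, hj2⟩ := (hPmem i j).mp hj
        rw [hbe] at hj1
        exact (hv x i (Finset.mem_union_left _ hx) j hj1 (ne_of_gt hj2)).symm
      · intro hv m i hi j hj hne2
        rcases lt_trichotomy i j with h | h | h
        · have h1 := mem_blockUnion_of_aux hS m j i hj hi h
          exact hv j i ((hPmem j i).mpr ⟨h1, h⟩)
        · exact absurd h hne2
        · have h1 := mem_blockUnion_of_aux hS m i j hi hj h
          exact (hv i j ((hPmem i j).mpr ⟨h1, h⟩)).symm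
    have hdef1 : ∀ (v : Fin k → Fin n) (i : Fin k),
        def1 A B v i = ((P i).filter (fun j => v j < v i)).card := by
      intro v i
      simp only [def1, hP, Finset.filter_filter]
    have key := tele t k n hn P hb hlt k
    have hfid : Finset.univ.filter (fun i : Fin k => (i : ℕ) < k) = Finset.univ := by
      ext i
      simp [i.isLt]
    rw [hfid] at key
    have hfset : Finset.univ.filter (fun v : Fin k → Fin n =>
        (∀ i : Fin k, (i : ℕ) < k → ∀ j ∈ P i, v j ≠ v i) ∧
        (∀ j : Fin k, k ≤ (j : ℕ) → v j = ⟨0, hn⟩))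
        = Finset.univ.filter (fun v : Fin k → Fin n => memV A B v) := by
      ext v
      simp only [Finset.mem_filter, Finset.mem_univ, true_and]
      rw [hmemV]
      constructor
      · rintro ⟨h1, -⟩ i j hj
        exact h1 i i.isLt j hj
      · intro h
        exact ⟨fun i _ j hj => h i j hj,
          fun j hj => absurd j.isLt (not_lt.mpr hj)⟩
    rw [hfset] at key
    calc ∑ v ∈ Finset.univ.filter (fun v : Fin k → Fin n => memV A B v),
          ∏ i : Fin k, t ^ ((v i : ℕ) - def1 A B v i)
        = ∑ v ∈ Finset.univ.filter (fun v : Fin k → Fin n => memV A B v),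
          ∏ i : Fin k, t ^ ((v i : ℕ) - ((P i).filter (fun j => v j < v i)).card) := by
          refine Finset.sum_congr rfl fun v _ => Finset.prod_congr rfl fun i _ => ?_
          rw [hdef1 v i]
      _ = ∏ i : Fin k, qint t (n - (P i).card) := key
      _ = ∏ i : Fin k, qint t (n - mS A B i) := by
          refine Finset.prod_congr rfl fun i _ => ?_
          rw [hP, mS]
end

section
/- The number of k-structures S = (A,B) with prescribed block sizes |A_i| = a_i and |B_i| = b_i for i = 1,...,l equals ∏_{i=2}^l binom(a_{i-1} + b_{i-1}, b_i). -/
open scoped Classical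

/-!
The blocks of `A` are consecutive intervals of prescribed sizes, so they are forced:
`A_i = [a_0 + ⋯ + a_{i-1}, a_0 + ⋯ + a_i)`. For this `A`, the conditions on `B` amount to
`B_0 = ∅` and `B_{i+1} ⊆ A_i ∪ B_i`: monotonicity pushes an element of `B_j ∩ A_i` down to every
`B_{j'}` with `i < j' ≤ j`. Since `B_i ⊆ A_0 ∪ ⋯ ∪ A_{i-1}` is disjoint from `A_i`, the set
`A_i ∪ B_i` has `a_i + b_i` elements, so `B_{i+1}` can be chosen in `C(a_i + b_i, b_{i+1})` ways
whatever the earlier choices were, and the count is the product of these binomials.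
-/

open Finset Function

section CarrySeq

variable {α : Type*} {C : ℕ → Finset α} {m : ℕ} {B : Fin m → Finset α}

def IsCarrySeq (C : ℕ → Finset α) {m : ℕ} (B : Fin m → Finset α) : Prop :=
  (∀ i : Fin m, i.val = 0 → B i = ∅) ∧ ∀ i j : Fin m, j.val = i.val + 1 → B j ⊆ C i ∪ B i

abbrev CarrySeq (C : ℕ → Finset α) (b : ℕ → ℕ) (m : ℕ) : Type _ :=
  {B : Fin m → Finset α // IsCarrySeq C B ∧ ∀ i, #(B i) = b i}

theorem IsCarrySeq.subset_biUnion (hB : IsCarrySeq C B) (i : Fin m) :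
    B i ⊆ (range i).biUnion C := by
  obtain ⟨i, hi⟩ := i
  induction i with
  | zero => simp [hB.1 ⟨0, hi⟩ rfl]
  | succ t ih =>
    refine (hB.2 ⟨t, by omega⟩ ⟨t + 1, hi⟩ rfl).trans (union_subset ?_ ?_)
    · exact subset_biUnion_of_mem C (self_mem_range_succ t)
    · exact (ih (by omega)).trans
        (biUnion_subset_biUnion_of_subset_left C (range_subset_range.mpr t.le_succ))

theorem IsCarrySeq.disjoint (hC : Pairwise (Disjoint on C)) (hB : IsCarrySeq C B) (i : Fin m) :
    Disjoint (C i) (B i) := by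
  refine disjoint_right.mpr fun x hxB hxC => ?_
  obtain ⟨j, hj, hxj⟩ := mem_biUnion.mp (hB.subset_biUnion i hxB)
  exact disjoint_left.mp (hC (mem_range.mp hj).ne') hxC hxj

theorem IsCarrySeq.mem_of_le (hC : Pairwise (Disjoint on C)) (hB : IsCarrySeq C B) {x : α}
    {i j j' : Fin m} (hxj : x ∈ B j) (hxi : x ∈ C i) (hij' : i < j') (hj'j : j' ≤ j) :
    x ∈ B j' := by
  obtain ⟨d, hd⟩ := Nat.exists_eq_add_of_le (Fin.le_def.mp hj'j)
  induction d generalizing j with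
  | zero => rwa [show j' = j from Fin.ext hd.symm]
  | succ d ih =>
    let t : Fin m := ⟨j' + d, by omega⟩
    have hit : (i : ℕ) ≠ t := ((Fin.lt_def.mp hij').trans_le (Nat.le_add_right _ _)).ne
    exact ih ((mem_union.mp (hB.2 t j hd hxj)).resolve_left (disjoint_left.mp (hC hit) hxi))
      (Nat.le_add_right _ _) rfl

theorem isCarrySeq_iff (hC : Pairwise (Disjoint on C)) :
    IsCarrySeq C B ↔ (∀ i : Fin m, i.val = 0 → B i = ∅) ∧
      (∀ i : Fin m, ∀ x ∈ B i, ∃ j < i, x ∈ C j) ∧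
      (∀ x : α, ∀ i j j' : Fin m, x ∈ B j → x ∈ C i → i < j' → j' ≤ j → x ∈ B j') := by
  refine ⟨fun hB => ⟨hB.1, fun i x hx => ?_, fun x i j j' => hB.mem_of_le hC⟩,
    fun ⟨hB0, hBC, hmono⟩ => ⟨hB0, fun i j hij x hx => ?_⟩⟩
  · obtain ⟨t, ht, hxt⟩ := mem_biUnion.mp (hB.subset_biUnion i hx)
    exact ⟨⟨t, (mem_range.mp ht).trans i.isLt⟩, mem_range.mp ht, hxt⟩
  · obtain ⟨t, htj, hxt⟩ := hBC j x hx
    rcases (Fin.le_def.mpr (show (t : ℕ) ≤ i by omega)).eq_or_lt with rfl | hti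
    · exact mem_union_left _ hxt
    · exact mem_union_right _ (hmono x t j i hx hxt hti (Fin.le_def.mpr (by omega)))

theorem isCarrySeq_snoc {n : ℕ} {B : Fin (n + 1) → Finset α} {s : Finset α} :
    IsCarrySeq C (Fin.snoc B s : Fin (n + 2) → Finset α) ↔
      IsCarrySeq C B ∧ s ⊆ C n ∪ B (Fin.last n) := by
  simp only [IsCarrySeq, Fin.forall_fin_succ' (n := n + 1), Fin.snoc_castSucc, Fin.snoc_last,
    Fin.val_castSucc, Fin.val_last, Nat.add_right_cancel_iff, forall_and]
  have hlast : (∀ i : Fin (n + 1), n = i → s ⊆ C i ∪ B i) ↔ s ⊆ C n ∪ B (Fin.last n) :=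
    ⟨fun h => h _ (Fin.val_last n).symm,
      fun h i hi => by rwa [show i = Fin.last n from Fin.ext hi.symm]⟩
  have hvac : ∀ i : Fin (n + 1), (i : ℕ) = n + 1 + 1 → B i ⊆ C (n + 1) ∪ s := by omega
  simp [hlast, iff_true_intro hvac, and_assoc]

theorem snoc_mem_carrySeq_iff {b : ℕ → ℕ} {n : ℕ} {B : Fin (n + 1) → Finset α}
    {s : Finset α} :
    (IsCarrySeq C (Fin.snoc B s : Fin (n + 2) → Finset α) ∧
        ∀ i, #((Fin.snoc B s : Fin (n + 2) → Finset α) i) = b i) ↔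
      (IsCarrySeq C B ∧ ∀ i, #(B i) = b i) ∧
        s ∈ powersetCard (b (n + 1)) (C n ∪ B (Fin.last n)) := by
  simp only [isCarrySeq_snoc, Fin.forall_fin_succ' (n := n + 1), Fin.snoc_castSucc,
    Fin.snoc_last, Fin.val_castSucc, Fin.val_last, mem_powersetCard]
  tauto

def carrySeqSnocEquiv (C : ℕ → Finset α) (b : ℕ → ℕ) (n : ℕ) :
    CarrySeq C b (n + 2) ≃
      Σ B : CarrySeq C b (n + 1), powersetCard (b (n + 1)) (C n ∪ B.1 (Fin.last n)) where
  toFun B :=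
    have h := (snoc_mem_carrySeq_iff (B := Fin.init B.1) (s := B.1 (Fin.last _))).mp
      (by simpa only [Fin.snoc_init_self] using B.2)
    ⟨⟨Fin.init B.1, h.1⟩, ⟨B.1 (Fin.last _), h.2⟩⟩
  invFun B := ⟨Fin.snoc B.1.1 B.2.1, snoc_mem_carrySeq_iff.mpr ⟨B.1.2, B.2.2⟩⟩
  left_inv B := Subtype.ext (Fin.snoc_init_self B.1)
  right_inv B := Sigma.subtype_ext (Subtype.ext (Fin.init_snoc (α := fun _ => Finset α) _ _))
    (Fin.snoc_last (α := fun _ => Finset α) _ _)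

theorem card_carrySeq_of_le_one {b : ℕ → ℕ} (hm : m ≤ 1) (hb0 : 0 < m → b 0 = 0) :
    Nat.card (CarrySeq C b m) = 1 := by
  have hempty (B : CarrySeq C b m) (i : Fin m) : B.1 i = ∅ := B.2.1.1 i (by omega)
  have hb (i : Fin m) : b i = 0 := by rw [show (i : ℕ) = 0 by omega]; exact hb0 i.pos
  rw [Nat.card_eq_one_iff_unique]
  exact ⟨⟨fun B B' => Subtype.ext (funext fun i => (hempty B i).trans (hempty B' i).symm)⟩,
    ⟨⟨fun _ => ∅, ⟨fun _ _ => rfl, fun _ _ _ => empty_subset _⟩, fun i => (hb i).symm⟩⟩⟩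

theorem card_carrySeq [Fintype α] (hC : Pairwise (Disjoint on C)) (b : ℕ → ℕ) :
    ∀ {m : ℕ}, (0 < m → b 0 = 0) →
      Nat.card (CarrySeq C b m) = ∏ i ∈ range (m - 1), (#(C i) + b i).choose (b (i + 1))
  | 0, hb0 | 1, hb0 =>
    (card_carrySeq_of_le_one (by norm_num) hb0).trans (prod_range_zero _).symm
  | n + 2, hb0 => by
    have hfibre (B : CarrySeq C b (n + 1)) :
        Nat.card (powersetCard (b (n + 1)) (C n ∪ B.1 (Fin.last n))) =
          (#(C n) + b n).choose (b (n + 1)) := by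
      rw [Nat.card_eq_finsetCard, card_powersetCard,
        card_union_of_disjoint (by simpa using B.2.1.disjoint hC (Fin.last n)), B.2.2]
      rfl
    rw [Nat.card_congr (carrySeqSnocEquiv C b n), Nat.card_sigma, Fintype.sum_congr _ _ hfibre,
      sum_const, card_univ, ← Nat.card_eq_fintype_card, card_carrySeq hC b (by simp [hb0]),
      smul_eq_mul, Nat.add_sub_cancel, show n + 2 - 1 = n + 1 from rfl, prod_range_succ]

end CarrySeq

theorem Fin.sum_Iio_eq_sum_range {M : Type*} [AddCommMonoid M] {l : ℕ} (f : ℕ → M)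
    (i : Fin l) :
    ∑ j ∈ Iio i, f j = ∑ j ∈ range i, f j := by
  rw [← Nat.Iio_eq_range, ← Fin.map_valEmbedding_Iio, sum_map]
  rfl

theorem Nat.card_subtype_fst_eq {α β : Type*} (a : α) (q : β → Prop) :
    Nat.card {p : α × β // p.1 = a ∧ q p.2} = Nat.card {b // q b} := by
  rw [Nat.card_congr (Equiv.subtypeProdEquivProd (p := (· = a)) (q := q)), Nat.card_prod,
    Nat.card_unique, one_mul]

section IntervalBlock

variable {k : ℕ} {a : ℕ → ℕ}

def intervalBlock (k : ℕ) (a : ℕ → ℕ) (i : ℕ) : Finset (Fin k) :=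
  {x | ∑ j ∈ range i, a j ≤ x ∧ x < ∑ j ∈ range (i + 1), a j}

theorem mem_intervalBlock {i : ℕ} {x : Fin k} :
    x ∈ intervalBlock k a i ↔ ∑ j ∈ range i, a j ≤ x ∧ x < ∑ j ∈ range (i + 1), a j := by
  simp [intervalBlock]

theorem lt_of_mem_intervalBlock {i j : ℕ} (hij : i < j) {x y : Fin k}
    (hx : x ∈ intervalBlock k a i) (hy : y ∈ intervalBlock k a j) : x < y := by
  have hsum : ∑ t ∈ range (i + 1), a t ≤ ∑ t ∈ range j, a t :=
    sum_le_sum_of_subset (range_subset_range.mpr hij)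
  have := (mem_intervalBlock.mp hx).2
  have := (mem_intervalBlock.mp hy).1
  exact Fin.lt_def.mpr (by omega)

theorem pairwise_disjoint_intervalBlock : Pairwise (Disjoint on intervalBlock k a) := by
  intro i j hij
  refine disjoint_left.mpr fun x hxi hxj => ?_
  rcases hij.lt_or_gt with h | h
  · exact (lt_of_mem_intervalBlock h hxi hxj).false
  · exact (lt_of_mem_intervalBlock h hxj hxi).false

theorem card_intervalBlock {i : ℕ} (hi : ∑ j ∈ range (i + 1), a j ≤ k) :
    #(intervalBlock k a i) = a i := by
  have hmap : (intervalBlock k a i).map Fin.valEmbedding =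
      Ico (∑ j ∈ range i, a j) (∑ j ∈ range (i + 1), a j) := by
    ext y
    simp only [mem_map, Fin.valEmbedding_apply, mem_Ico, mem_intervalBlock]
    exact ⟨by rintro ⟨x, hx, rfl⟩; exact hx, fun hy => ⟨⟨y, by omega⟩, hy, rfl⟩⟩
  rw [← card_map, hmap, Nat.card_Ico, sum_range_succ, Nat.add_sub_cancel_left]

theorem exists_mem_intervalBlock {l : ℕ} (x : Fin k) (hx : x < ∑ j ∈ range l, a j) :
    ∃ i < l, x ∈ intervalBlock k a i := by
  induction l with
  | zero => simp at hx
  | succ l ih =>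
    by_cases hxl : x < ∑ j ∈ range l, a j
    · obtain ⟨i, hil, hxi⟩ := ih hxl
      exact ⟨i, by omega, hxi⟩
    · exact ⟨l, by omega, mem_intervalBlock.mpr ⟨by omega, hx⟩⟩

theorem subset_intervalBlock {l : ℕ} {A : Fin l → Finset (Fin k)} (hA : ∀ x, ∃! i, x ∈ A i)
    (hord : ∀ i j : Fin l, i < j → ∀ x ∈ A i, ∀ y ∈ A j, x < y) (hcard : ∀ i, #(A i) = a i)
    (i : Fin l) : A i ⊆ intervalBlock k a i := by
  intro x hx
  have hdisj : Set.PairwiseDisjoint (Iio i : Set (Fin l)) A := fun j _ j' _ hjj' =>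
    disjoint_left.mpr fun y hyj hyj' => hjj' ((hA y).unique hyj hyj')
  have hbefore : (Iio i).biUnion A ⊆ Iio x := by
    intro y hy
    obtain ⟨j, hj, hyj⟩ := mem_biUnion.mp hy
    exact mem_Iio.mpr (hord j i (mem_Iio.mp hj) y hyj x hx)
  have hafter : Iio x ⊆ ((Iio i).biUnion A ∪ A i).erase x := by
    intro y hy
    obtain ⟨j, hyj, -⟩ := hA y
    refine mem_erase.mpr ⟨(mem_Iio.mp hy).ne, ?_⟩
    rcases lt_trichotomy j i with h | rfl | h
    · exact mem_union_left _ (mem_biUnion.mpr ⟨j, mem_Iio.mpr h, hyj⟩)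
    · exact mem_union_right _ hyj
    · exact absurd (hord i j h x hx y hyj) (mem_Iio.mp hy).asymm
  have hlower := card_le_card hbefore
  have hupper := card_le_card hafter
  rw [card_biUnion hdisj, Fin.card_Iio] at hlower
  rw [card_erase_of_mem (mem_union_right _ hx), Fin.card_Iio] at hupper
  have hunion : #((Iio i).biUnion A ∪ A i) ≤ ∑ j ∈ Iio i, #(A j) + #(A i) :=
    (card_union_le _ _).trans (Nat.add_le_add_right card_biUnion_le _)
  have hpos := card_pos.mpr ⟨x, mem_union_right ((Iio i).biUnion A) hx⟩
  simp only [hcard, Fin.sum_Iio_eq_sum_range] at hlower hunion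
  rw [mem_intervalBlock, sum_range_succ]
  omega

theorem eq_intervalBlock {l : ℕ} {A : Fin l → Finset (Fin k)} (hA : ∀ x, ∃! i, x ∈ A i)
    (hord : ∀ i j : Fin l, i < j → ∀ x ∈ A i, ∀ y ∈ A j, x < y) (hcard : ∀ i, #(A i) = a i)
    (i : Fin l) : A i = intervalBlock k a i := by
  refine (subset_intervalBlock hA hord hcard i).antisymm fun x hxi => ?_
  obtain ⟨j, hxj, -⟩ := hA x
  obtain rfl : j = i := by
    by_contra hji
    exact disjoint_left.mp (pairwise_disjoint_intervalBlock (Fin.val_ne_of_ne hji))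
      (subset_intervalBlock hA hord hcard j hxj) hxi
  exact hxj

end IntervalBlock

theorem isKStructure_and_card_iff {k l : ℕ} {a b : ℕ → ℕ} (hk : ∑ i ∈ range l, a i = k)
    (ha : ∀ i ∈ range l, 0 < a i) (A B : Fin l → Finset (Fin k)) :
    (IsKStructure A B ∧ ∀ i : Fin l, #(A i) = a i ∧ #(B i) = b i) ↔
      A = (fun i : Fin l => intervalBlock k a i) ∧
        (IsCarrySeq (intervalBlock k a) B ∧ ∀ i, #(B i) = b i) := by
  have hcardI (i : Fin l) : #(intervalBlock k a i) = a i :=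
    card_intervalBlock (hk ▸ sum_le_sum_of_subset (range_subset_range.mpr i.isLt))
  constructor
  · rintro ⟨⟨-, hA, hord, hB0, hBA, hmono⟩, hcard⟩
    obtain rfl := funext (eq_intervalBlock hA hord fun i => (hcard i).1)
    exact ⟨rfl, (isCarrySeq_iff pairwise_disjoint_intervalBlock).mpr ⟨hB0, hBA, hmono⟩,
      fun i => (hcard i).2⟩
  · rintro ⟨rfl, hB, hBcard⟩
    obtain ⟨hB0, hBA, hmono⟩ := (isCarrySeq_iff pairwise_disjoint_intervalBlock).mp hB
    refine ⟨⟨fun i => ?_, fun x => ?_, fun i j hij x hx y hy => lt_of_mem_intervalBlock hij hx hy,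
        hB0, hBA, hmono⟩, fun i => ⟨hcardI i, hBcard i⟩⟩
    · exact card_pos.mp (hcardI i ▸ ha i (mem_range.mpr i.isLt))
    · obtain ⟨i, hil, hxi⟩ := exists_mem_intervalBlock (a := a) (l := l) x (by omega)
      refine ⟨⟨i, hil⟩, hxi, fun j hxj => Fin.ext (by_contra fun hji =>
        disjoint_left.mp (pairwise_disjoint_intervalBlock hji) hxj hxi)⟩

/-- Blocks are indexed from `0`, so the right-hand side is `∏_{i=2}^{l} C(a_{i-1} + b_{i-1}, b_i)`
in the `1`-indexed notation of the paper. -/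
theorem kstructure_count (k l : ℕ) (a b : ℕ → ℕ)
    (hk : ∑ i ∈ Finset.range l, a i = k)
    (ha : ∀ i ∈ Finset.range l, 0 < a i)
    (hb0 : 0 < l → b 0 = 0) :
    Nat.card {p : (Fin l → Finset (Fin k)) × (Fin l → Finset (Fin k)) //
        IsKStructure p.1 p.2 ∧
        ∀ i : Fin l, (p.1 i).card = a i.val ∧ (p.2 i).card = b i.val} =
      ∏ i ∈ Finset.range (l - 1), (a i + b i).choose (b (i + 1)) := by
  have hiff (p : (Fin l → Finset (Fin k)) × (Fin l → Finset (Fin k))) :=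
    isKStructure_and_card_iff (b := b) hk ha p.1 p.2
  have hcardI (i : ℕ) (hi : i ∈ range (l - 1)) : #(intervalBlock k a i) = a i :=
    card_intervalBlock (hk ▸ sum_le_sum_of_subset (range_subset_range.mpr (by grind)))
  calc _ = Nat.card (CarrySeq (intervalBlock k a) b l) :=
        (Nat.card_congr (Equiv.subtypeEquivRight hiff)).trans (Nat.card_subtype_fst_eq _
          fun B => IsCarrySeq (intervalBlock k a) B ∧ ∀ i, #(B i) = b i)
    _ = ∏ i ∈ range (l - 1), (#(intervalBlock k a i) + b i).choose (b (i + 1)) :=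
        card_carrySeq pairwise_disjoint_intervalBlock b hb0
    _ = _ := prod_congr rfl fun i hi => by rw [hcardI i hi]
end

section
/- Let f be a flow on a finite digraph G in which every vertex has exactly one outgoing blue edge e^b_v and one outgoing red edge e^r_v. Then the number of sortings of f equals mult(f) = ∏_v binom(f(v), f(e^b_v)), where f(v) is the total flow through v. -/
open scoped Classical

/-- `IsSorting tgt fb C` : `C` is a sorting of the flow with blue out-values `fb`.
Here `E` is the set of labeled copies of red edges, `tgt e` is the terminal vertex of
the copy `e`, and for each vertex `i` the set `C i` is a subset of cardinality
`fb i` of `C (i-1) ∪ {copies of red edges terminating at i}` (with `C 0` a subset of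
the red copies terminating at the first vertex). -/
def IsSorting {r : ℕ} {E : Type*} [Fintype E] (tgt : E → Fin r) (fb : Fin r → ℕ)
    (C : Fin r → Finset E) : Prop :=
  ∀ i : Fin r, (C i).card = fb i ∧
    C i ⊆ (if i.val = 0 then ∅
            else C ⟨i.val - 1, lt_of_le_of_lt (Nat.sub_le _ _) i.isLt⟩) ∪
          Finset.univ.filter (fun e => tgt e = i)

/-- `Finset.mem_union` with the `DecidableEq` instance as a unification variable,
to cope with classical instances. -/
lemma mem_union' {α : Type*} {i : DecidableEq α} {s t : Finset α} {a : α} :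
    a ∈ @Union.union _ (@Finset.instUnion α i) s t ↔ a ∈ s ∨ a ∈ t := by
  have : i = Classical.decEq α := Subsingleton.elim _ _
  subst this
  exact @Finset.mem_union _ (Classical.decEq α) _ _ _

/-- `Finset.mem_filter` with the `DecidablePred` instance as a unification variable. -/
lemma mem_filter' {α : Type*} {p : α → Prop} {i : DecidablePred p} {s : Finset α} {a : α} :
    a ∈ @Finset.filter α p i s ↔ a ∈ s ∧ p a := by
  have : i = fun a => Classical.propDecidable (p a) := Subsingleton.elim _ _
  subst this
  exact @Finset.mem_filter _ _ _ _ _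

section Aux

variable {r : ℕ} {E : Type*} [Fintype E]

/-- In a sorting, every element of `C i` targets a vertex `≤ i`. -/
lemma sorting_tgt_le {tgt : E → Fin r} {fb : Fin r → ℕ} {C : Fin r → Finset E}
    (h : IsSorting tgt fb C) :
    ∀ (n : ℕ) (hn : n < r), ∀ e ∈ C ⟨n, hn⟩, (tgt e).val ≤ n := by
  intro n
  induction n with
  | zero =>
      intro hn e he
      have h2 := (h ⟨0, hn⟩).2 he
      rw [if_pos rfl, Finset.empty_union, Finset.mem_filter] at h2
      exact le_of_eq (by rw [h2.2])
  | succ n ih =>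
      intro hn e he
      have h2 := (h ⟨n+1, hn⟩).2 he
      rw [if_neg (by simp)] at h2
      rcases Finset.mem_union.1 h2 with h3 | h3
      · exact le_trans (ih (by omega) e h3) (Nat.le_succ n)
      · rw [(Finset.mem_filter.1 h3).2]

lemma sorting_tgt_le' {tgt : E → Fin r} {fb : Fin r → ℕ} {C : Fin r → Finset E}
    (h : IsSorting tgt fb C) (i : Fin r) : ∀ e ∈ C i, (tgt e).val ≤ i.val :=
  fun e he => sorting_tgt_le h i.val i.isLt e he

/-- The restricted target map, on copies not targeting the last vertex. -/
def tgtRes (tgt : E → Fin (r+1)) (e : {e : E // tgt e ≠ Fin.last r}) : Fin r :=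
  ⟨(tgt e.1).val, by
    have h1 := (tgt e.1).isLt
    have h2 : (tgt e.1).val ≠ r := fun h => e.2 (Fin.ext h)
    omega⟩

lemma tgtRes_eq_iff (tgt : E → Fin (r+1)) (e : {e : E // tgt e ≠ Fin.last r}) (i : Fin r) :
    tgtRes tgt e = i ↔ tgt e.1 = i.castSucc := by
  rw [Fin.ext_iff, Fin.ext_iff]
  simp [tgtRes]

/-- The available set for the choice at the last vertex. -/
noncomputable def availSet (tgt : E → Fin (r+1)) (C' : Fin r → Finset {e : E // tgt e ≠ Fin.last r}) :
    Finset E :=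
  (if h : r = 0 then ∅
    else (C' ⟨r - 1, by omega⟩).map (Function.Embedding.subtype _)) ∪
    Finset.univ.filter (fun e => tgt e = Fin.last r)

lemma filter_tgtRes_card (tgt : E → Fin (r+1)) (i : Fin r) :
    (Finset.univ.filter (fun e => tgtRes tgt e = i)).card
      = (Finset.univ.filter (fun e : E => tgt e = i.castSucc)).card := by
  have key : (Finset.univ.filter (fun e : E => tgt e = i.castSucc))
      = (Finset.univ.filter (fun e => tgtRes tgt e = i)).map
          (Function.Embedding.subtype _) := by
    ext e
    simp only [Finset.mem_filter, Finset.mem_univ, true_and, Finset.mem_map,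
      Function.Embedding.coe_subtype, Subtype.exists]
    constructor
    · intro h
      have hpe : tgt e ≠ Fin.last r := by
        intro hc
        rw [hc] at h
        have := congrArg Fin.val h
        simp at this
        omega
      exact ⟨e, hpe, (tgtRes_eq_iff _ _ _).2 h, rfl⟩
    · rintro ⟨a, ha, hmem, rfl⟩
      exact (tgtRes_eq_iff _ _ _).1 hmem
  rw [key, Finset.card_map]

lemma sorting_map_res {tgt : E → Fin (r+1)} {fb : Fin (r+1) → ℕ} {C : Fin (r+1) → Finset E}
    (hC : IsSorting tgt fb C) (i : Fin r) :
    ((C i.castSucc).subtype (fun e => tgt e ≠ Fin.last r)).map (Function.Embedding.subtype _)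
      = C i.castSucc := by
  rw [Finset.subtype_map]
  apply Finset.filter_true_of_mem
  intro e he hc
  have h1 := sorting_tgt_le' hC i.castSucc e he
  rw [hc] at h1
  simp only [Fin.val_last, Fin.coe_castSucc] at h1
  exact absurd h1 (by omega)

lemma sorting_res {tgt : E → Fin (r+1)} {fb : Fin (r+1) → ℕ} {C : Fin (r+1) → Finset E}
    (hC : IsSorting tgt fb C) :
    IsSorting (tgtRes tgt) (fun i => fb i.castSucc)
      (fun i => (C i.castSucc).subtype (fun e => tgt e ≠ Fin.last r)) := by
  intro i
  constructor
  · rw [Finset.card_subtype, Finset.filter_true_of_mem, (hC i.castSucc).1]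
    intro e he hc
    have h1 := sorting_tgt_le' hC i.castSucc e he
    rw [hc] at h1
    simp only [Fin.val_last, Fin.coe_castSucc] at h1
    exact absurd h1 (by omega)
  · intro x hx
    have hx1 : x.1 ∈ C i.castSucc := Finset.mem_subtype.1 hx
    have h2 := mem_union'.1 ((hC i.castSucc).2 hx1)
    refine mem_union'.2 ?_
    by_cases h0' : i.val = 0
    · rw [if_pos h0']
      rw [if_pos (show (i.castSucc).val = 0 by simpa using h0')] at h2
      rcases h2 with h2 | h2
      · exact absurd h2 (Finset.notMem_empty _)
      · right
        refine mem_filter'.2 ⟨Finset.mem_univ _, ?_⟩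
        exact (tgtRes_eq_iff _ _ _).2 (mem_filter'.1 h2).2
    · rw [if_neg h0']
      rw [if_neg (show ¬ (i.castSucc).val = 0 by simpa using h0')] at h2
      rcases h2 with h2 | h2
      · left
        refine Finset.mem_subtype.2 ?_
        have hidx : ((⟨i.val - 1, lt_of_le_of_lt (Nat.sub_le _ _) i.isLt⟩ : Fin r)).castSucc
            = (⟨(i.castSucc).val - 1,
                lt_of_le_of_lt (Nat.sub_le _ _) (i.castSucc).isLt⟩ : Fin (r+1)) := by
          ext; simp
        rw [hidx]
        exact h2
      · right
        refine mem_filter'.2 ⟨Finset.mem_univ _, ?_⟩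
        exact (tgtRes_eq_iff _ _ _).2 (mem_filter'.1 h2).2

/-- Extending a sorting of the restricted problem by a choice `S` at the last vertex. -/
lemma sorting_ext {tgt : E → Fin (r+1)} {fb : Fin (r+1) → ℕ}
    {C' : Fin r → Finset {e : E // tgt e ≠ Fin.last r}} {S : Finset E}
    (hC' : IsSorting (tgtRes tgt) (fun i => fb i.castSucc) C')
    (hS1 : S.card = fb (Fin.last r)) (hS2 : S ⊆ availSet tgt C') :
    IsSorting tgt fb
      (fun i => if h : i.val < r then (C' ⟨i.val, h⟩).map (Function.Embedding.subtype _)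
                else S) := by
  intro i
  dsimp only
  by_cases h : i.val < r
  · rw [dif_pos h]
    have hcast : (⟨i.val, h⟩ : Fin r).castSucc = i := Fin.ext rfl
    constructor
    · rw [Finset.card_map]
      exact (hC' ⟨i.val, h⟩).1
    · intro x hx
      rw [Finset.mem_map] at hx
      obtain ⟨y, hy, rfl⟩ := hx
      have h2 := mem_union'.1 ((hC' ⟨i.val, h⟩).2 hy)
      refine mem_union'.2 ?_
      by_cases h0' : i.val = 0
      · rw [if_pos h0']
        rw [if_pos (show (⟨i.val, h⟩ : Fin r).val = 0 from h0')] at h2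
        rcases h2 with h2 | h2
        · exact absurd h2 (Finset.notMem_empty _)
        · right
          refine mem_filter'.2 ⟨Finset.mem_univ _, ?_⟩
          exact (tgtRes_eq_iff _ _ _).1 (mem_filter'.1 h2).2
      · rw [if_neg h0']
        rw [if_neg (show ¬ (⟨i.val, h⟩ : Fin r).val = 0 from h0')] at h2
        rcases h2 with h2 | h2
        · left
          rw [dif_pos (show (⟨i.val - 1, lt_of_le_of_lt (Nat.sub_le _ _) i.isLt⟩
              : Fin (r+1)).val < r by exact lt_of_le_of_lt (Nat.sub_le _ _) h)]
          exact Finset.mem_map.2 ⟨y, h2, rfl⟩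
        · right
          refine mem_filter'.2 ⟨Finset.mem_univ _, ?_⟩
          exact (tgtRes_eq_iff _ _ _).1 (mem_filter'.1 h2).2
  · have hi : i = Fin.last r := Fin.ext (by have := i.isLt; simp [Fin.val_last]; omega)
    subst hi
    rw [dif_neg h]
    refine ⟨hS1, ?_⟩
    intro x hx
    have hmem := hS2 hx
    unfold availSet at hmem
    replace hmem := mem_union'.1 hmem
    refine mem_union'.2 ?_
    by_cases hr : r = 0
    · rw [if_pos (show (Fin.last r).val = 0 from hr)]
      rw [dif_pos hr] at hmem
      exact hmem
    · rw [if_neg (show ¬ (Fin.last r).val = 0 from hr)]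
      rw [dif_neg hr] at hmem
      rcases hmem with hmem | hmem
      · left
        rw [dif_pos (show (⟨(Fin.last r).val - 1,
            lt_of_le_of_lt (Nat.sub_le _ _) (Fin.last r).isLt⟩ : Fin (r+1)).val < r by
              simp [Fin.val_last]; omega)]
        exact hmem
      · right
        exact hmem

lemma card_union' {α : Type*} {i : DecidableEq α} {s t : Finset α} (h : Disjoint s t) :
    (@Union.union _ (@Finset.instUnion α i) s t).card = s.card + t.card := by
  have : i = Classical.decEq α := Subsingleton.elim _ _
  subst this
  exact @Finset.card_union_of_disjoint _ _ _ (Classical.decEq α) h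

lemma subtype_map_subtype {α : Type*} {p : α → Prop} {i : DecidablePred p}
    (s : Finset {x // p x}) :
    @Finset.subtype _ p i (s.map (Function.Embedding.subtype p)) = s := by
  have : i = fun a => Classical.propDecidable (p a) := Subsingleton.elim _ _
  subst this
  ext x
  simp only [Finset.mem_subtype, Finset.mem_map, Function.Embedding.coe_subtype,
    Subtype.exists, Subtype.coe_eta]
  constructor
  · rintro ⟨a, ha, hmem, h⟩
    exact (Subtype.ext h : (⟨a, ha⟩ : Subtype p) = x) ▸ hmem
  · intro hx
    exact ⟨x.1, x.2, by simpa using hx, rfl⟩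

lemma sigma_subtype_ext {A : Type*} {β : Type*} {q : A → β → Prop}
    (x y : (a : A) × {b : β // q a b}) (h1 : x.1 = y.1) (h2 : x.2.1 = y.2.1) : x = y := by
  obtain ⟨x1, x2⟩ := x
  obtain ⟨y1, y2⟩ := y
  cases h1
  exact congrArg (Sigma.mk x1) (Subtype.ext h2)

/-- The choice set at the last vertex of a sorting is contained in the available set
determined by the restricted sorting. -/
lemma sorting_last_subset {tgt : E → Fin (r+1)} {fb : Fin (r+1) → ℕ} {C : Fin (r+1) → Finset E}
    (hC : IsSorting tgt fb C) :
    C (Fin.last r) ⊆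
      availSet tgt (fun i => (C i.castSucc).subtype (fun e => tgt e ≠ Fin.last r)) := by
  intro x hx
  have h2 := mem_union'.1 ((hC (Fin.last r)).2 hx)
  unfold availSet
  refine mem_union'.2 ?_
  by_cases hr : r = 0
  · rw [if_pos (show (Fin.last r).val = 0 from hr)] at h2
    rw [dif_pos hr]
    rcases h2 with h2 | h2
    · exact absurd h2 (Finset.notMem_empty _)
    · exact Or.inr h2
  · rw [if_neg (show ¬ (Fin.last r).val = 0 from hr)] at h2
    rw [dif_neg hr]
    rcases h2 with h2 | h2
    · left
      dsimp only
      rw [sorting_map_res hC ⟨r - 1, by omega⟩]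
      exact h2
    · exact Or.inr h2

/-- Restriction of a sorting on `r+1` vertices to the first `r` vertices, together with
the remembered choice at the last vertex. -/
noncomputable def resMap (tgt : E → Fin (r+1)) (fb : Fin (r+1) → ℕ)
    (X : {C : Fin (r+1) → Finset E // IsSorting tgt fb C}) :
    (C' : {C' : Fin r → Finset {e : E // tgt e ≠ Fin.last r} //
            IsSorting (tgtRes tgt) (fun i => fb i.castSucc) C'}) ×
      {S : Finset E // S.card = fb (Fin.last r) ∧ S ⊆ availSet tgt C'.1} :=
  ⟨⟨fun i => (X.1 i.castSucc).subtype _, sorting_res X.2⟩,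
    ⟨X.1 (Fin.last r), (X.2 (Fin.last r)).1, sorting_last_subset X.2⟩⟩

/-- Extension of a restricted sorting by a choice at the last vertex. -/
noncomputable def extMap (tgt : E → Fin (r+1)) (fb : Fin (r+1) → ℕ)
    (Y : (C' : {C' : Fin r → Finset {e : E // tgt e ≠ Fin.last r} //
            IsSorting (tgtRes tgt) (fun i => fb i.castSucc) C'}) ×
      {S : Finset E // S.card = fb (Fin.last r) ∧ S ⊆ availSet tgt C'.1}) :
    {C : Fin (r+1) → Finset E // IsSorting tgt fb C} :=
  ⟨fun i => if h : i.val < r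
      then (Y.1.1 ⟨i.val, h⟩).map (Function.Embedding.subtype _) else Y.2.1,
    sorting_ext Y.1.2 Y.2.2.1 Y.2.2.2⟩

lemma extMap_resMap (tgt : E → Fin (r+1)) (fb : Fin (r+1) → ℕ)
    (X : {C : Fin (r+1) → Finset E // IsSorting tgt fb C}) :
    extMap tgt fb (resMap tgt fb X) = X := by
  refine Subtype.ext (funext fun i => ?_)
  simp only [extMap, resMap]
  by_cases h : i.val < r
  · rw [dif_pos h]
    exact sorting_map_res X.2 ⟨i.val, h⟩
  · rw [dif_neg h]
    exact congrArg X.1 (Fin.ext (by have := i.isLt; simp [Fin.val_last]; omega)).symm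

lemma resMap_extMap (tgt : E → Fin (r+1)) (fb : Fin (r+1) → ℕ)
    (Y : (C' : {C' : Fin r → Finset {e : E // tgt e ≠ Fin.last r} //
            IsSorting (tgtRes tgt) (fun i => fb i.castSucc) C'}) ×
      {S : Finset E // S.card = fb (Fin.last r) ∧ S ⊆ availSet tgt C'.1}) :
    resMap tgt fb (extMap tgt fb Y) = Y := by
  refine sigma_subtype_ext _ _ ?_ ?_
  · refine Subtype.ext (funext fun i => ?_)
    simp only [resMap, extMap]
    rw [dif_pos (show (i.castSucc).val < r from i.isLt)]
    exact subtype_map_subtype (Y.1.1 ⟨i.val, i.isLt⟩)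
  · simp only [resMap, extMap]
    rw [dif_neg (show ¬ (Fin.last r).val < r by simp)]

lemma resMap_bijective (tgt : E → Fin (r+1)) (fb : Fin (r+1) → ℕ) :
    Function.Bijective (resMap tgt fb) :=
  ⟨Function.LeftInverse.injective (extMap_resMap tgt fb),
    Function.RightInverse.surjective (resMap_extMap tgt fb)⟩

end Aux

universe u

lemma card_sortings_aux (r : ℕ) :
    ∀ {E : Type u} [Fintype E] (tgt : E → Fin r) (fb fr : Fin r → ℕ),
    (∀ i : Fin r, i.val = 0 →
      (Finset.univ.filter (fun e => tgt e = i)).card = fb i + fr i) →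
    (∀ i : Fin r, 0 < i.val →
      fb i + fr i =
        fb ⟨i.val - 1, lt_of_le_of_lt (Nat.sub_le _ _) i.isLt⟩ +
          (Finset.univ.filter (fun e => tgt e = i)).card) →
    Nat.card {C : Fin r → Finset E // IsSorting tgt fb C} =
      ∏ v : Fin r, (fb v + fr v).choose (fb v) := by
  induction r with
  | zero =>
      intro E _ tgt fb fr _ _
      rw [Nat.card_eq_fintype_card, Fin.prod_univ_zero]
      rw [Fintype.card_eq_one_iff]
      exact ⟨⟨fun _ => ∅, fun i => i.elim0⟩, fun X => Subtype.ext (funext fun i => i.elim0)⟩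
  | succ r IH =>
      intro E _ tgt fb fr h0 hcons
      rw [Nat.card_eq_of_bijective _ (resMap_bijective tgt fb)]
      rw [Nat.card_eq_fintype_card, Fintype.card_sigma]
      have hfib : ∀ (A : Finset E) (k : ℕ),
          Fintype.card {S : Finset E // S.card = k ∧ S ⊆ A} = A.card.choose k := by
        intro A k
        rw [Fintype.card_subtype, ← Finset.card_powersetCard k A]
        congr 1
        ext S
        rw [Finset.mem_filter, Finset.mem_powersetCard]
        simp [and_comm]
      have havail : ∀ C' : {C' : Fin r → Finset {e : E // tgt e ≠ Fin.last r} //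
            IsSorting (tgtRes tgt) (fun i => fb i.castSucc) C'},
          (availSet tgt C'.1).card = fb (Fin.last r) + fr (Fin.last r) := by
        rintro ⟨C', hC'⟩
        unfold availSet
        by_cases hr : r = 0
        · rw [dif_pos hr, Finset.empty_union]
          exact h0 (Fin.last r) hr
        · rw [dif_neg hr]
          have hlt : r - 1 < r := by omega
          have hdis : Disjoint ((C' ⟨r - 1, hlt⟩).map (Function.Embedding.subtype _))
              (Finset.univ.filter (fun e => tgt e = Fin.last r)) := by
            rw [Finset.disjoint_left]
            intro x hx1 hx2
            obtain ⟨y, hy, rfl⟩ := Finset.mem_map.1 hx1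
            exact y.2 ((mem_filter'.1 hx2).2)
          have h2 := hcons (Fin.last r) (Nat.pos_of_ne_zero hr)
          rw [card_union' hdis, Finset.card_map, h2]
          exact congrArg
            (fun t => t + (Finset.univ.filter (fun e => tgt e = Fin.last r)).card)
            ((hC' ⟨r - 1, hlt⟩).1)
      have hsum : ∀ C' ∈ (Finset.univ : Finset {C' : Fin r →
            Finset {e : E // tgt e ≠ Fin.last r} //
            IsSorting (tgtRes tgt) (fun i => fb i.castSucc) C'}),
          Fintype.card {S : Finset E // S.card = fb (Fin.last r) ∧ S ⊆ availSet tgt C'.1}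
            = (fb (Fin.last r) + fr (Fin.last r)).choose (fb (Fin.last r)) := by
        intro C' _
        rw [hfib, havail C']
      rw [Finset.sum_congr rfl hsum, Finset.sum_const, Finset.card_univ, smul_eq_mul]
      have hres := IH (tgtRes tgt) (fun i => fb i.castSucc) (fun i => fr i.castSucc)
        (fun i hi => by
          rw [filter_tgtRes_card]
          exact h0 i.castSucc (by simpa using hi))
        (fun i hi => by
          rw [filter_tgtRes_card]
          exact hcons i.castSucc (by simpa using hi))
      rw [← Nat.card_eq_fintype_card, hres]
      rw [Fin.prod_univ_castSucc (f := fun v : Fin (r+1) => (fb v + fr v).choose (fb v))]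


/-- For a flow `f` on a digraph in which each vertex has one outgoing blue edge
(carrying flow `fb v`) and one outgoing red edge (carrying flow `fr v`), under the
conservation hypotheses of the arc-graph of a long knot, the number of sortings of `f`
equals `mult(f) = ∏_v C(f(v), f(e^b_v))` with `f(v) = fb v + fr v`. -/
theorem card_sortings_eq_mult {r : ℕ} {E : Type*} [Fintype E]
    (tgt : E → Fin r) (fb fr : Fin r → ℕ)
    (h0 : ∀ i : Fin r, i.val = 0 →
      (Finset.univ.filter (fun e => tgt e = i)).card = fb i + fr i)
    (hcons : ∀ i : Fin r, 0 < i.val →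
      fb i + fr i =
        fb ⟨i.val - 1, lt_of_le_of_lt (Nat.sub_le _ _) i.isLt⟩ +
          (Finset.univ.filter (fun e => tgt e = i)).card)
    (hlast : ∀ i : Fin r, i.val = r - 1 → fr i = 0) :
    Nat.card {C : Fin r → Finset E // IsSorting tgt fb C} =
      ∏ v : Fin r, (fb v + fr v).choose (fb v) := by
  exact card_sortings_aux r tgt fb fr h0 hcons
end

section
/- Let f be a flow on a digraph with red and blue edges, with one blue and one red edge leaving each vertex. For each n, the sum over all n-sortings P = (C,v) of f of the weight b(P) = t^{n(f_b^- - f_b^+)}(1-t)^{f_r^-} t^{f_r^-(v)} (1-t^{-1})^{f_r^+} t^{-f_r^+(n-1) + f_r^+(v)} equals mult(f) · β(f)|_{t→t^n}, where mult(f) = ∏_v binom(f(v), f(e^b_v)) and β(f) substitutes edge weights t^{∓1} for blue and (1 - t^{∓1}) for red edges according to vertex signs. -/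
/-!
A sorting is built vertex by vertex: given `C_{i-1}`, the set `C_i` is any `f(e^b_i)`-subset of
`C_{i-1} ∪ {red copies ending at i}`. The two sets are disjoint, because every copy in `C_{i-1}`
ends at a vertex `≤ i - 1`; by flow conservation their union has `f(i)` elements, so there are
`mult f = ∏ᵢ binom(f(i), f(e^b_i))` sortings.

The weight does not depend on `C`, and depends on the labels `v` only through `t ^ ∑ₑ vₑ`;
summing over `v` gives `[n]_t ^ #(red copies)` with `[n]_t = 1 + t + ⋯ + t^(n-1)`. The identities
`(1 - t) [n]_t = 1 - tⁿ` and `(1 - t⁻¹) t^(1-n) [n]_t = 1 - t^(-n)` then turn the red prefactors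
into the red weights of `β(f)|_{t → tⁿ}`.
-/

open scoped Classical

open Finset

section Sorting

variable {r : ℕ} {E : Type*}

/-- `C_{i-1}`, with the convention `C_{-1} = ∅`. -/
def prevSet (C : Fin r → Finset E) (i : Fin r) : Finset E :=
  if i.val = 0 then ∅ else C ⟨i.val - 1, lt_of_le_of_lt (Nat.sub_le _ _) i.isLt⟩

/-- `f(e^b_{i-1})`, with the convention `f(e^b_{-1}) = 0`. -/
def prevFlow (fb : Fin r → ℕ) (i : Fin r) : ℕ :=
  if i.val = 0 then 0 else fb ⟨i.val - 1, lt_of_le_of_lt (Nat.sub_le _ _) i.isLt⟩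

theorem prevSet_update_of_le {C : Fin r → Finset E} {i M : Fin r} (X : Finset E) (hi : i ≤ M) :
    prevSet (Function.update C M X) i = prevSet C i := by
  unfold prevSet
  split_ifs with h0
  · rfl
  · refine Function.update_of_ne (fun h => ?_) _ _
    have := congrArg Fin.val h
    simp only at this
    omega

variable [Fintype E] (tgt : E → Fin r) (fb : Fin r → ℕ)

def SortingStep (C : Fin r → Finset E) (i : Fin r) : Prop :=
  #(C i) = fb i ∧ C i ⊆ prevSet C i ∪ ({e | tgt e = i} : Finset E)

def IsPartialSorting (m : ℕ) (C : Fin r → Finset E) : Prop :=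
  (∀ i : Fin r, i.val < m → SortingStep tgt fb C i) ∧ ∀ i : Fin r, m ≤ i.val → C i = ∅

variable {tgt fb}

theorem sortingStep_update_of_lt {C : Fin r → Finset E} {i M : Fin r} (X : Finset E)
    (hi : i < M) : SortingStep tgt fb (Function.update C M X) i ↔ SortingStep tgt fb C i := by
  rw [SortingStep, SortingStep, prevSet_update_of_le X hi.le, Function.update_of_ne hi.ne]

theorem tgt_le_of_forall_sortingStep {m : ℕ} {C : Fin r → Finset E}
    (hC : ∀ i : Fin r, i.val < m → SortingStep tgt fb C i) {i : Fin r} (hi : i.val < m) :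
    ∀ e ∈ C i, tgt e ≤ i := by
  induction hk : i.val generalizing i with
  | zero =>
    intro e he
    exact le_of_eq (by simpa [prevSet, hk] using (hC i hi).2 he)
  | succ k ih =>
    intro e he
    rcases mem_union.1 ((hC i hi).2 he) with hprev | htgt
    · rw [prevSet, if_neg (by omega)] at hprev
      exact (ih (by simp only; omega) (by simp only; omega) e hprev).trans
        (Fin.le_def.2 (Nat.sub_le _ _))
    · exact (mem_filter.1 htgt).2.le

theorem isPartialSorting_succ_iff {m : ℕ} {C : Fin r → Finset E} {M : Fin r} (hM : M.val = m) :
    IsPartialSorting tgt fb (m + 1) C ↔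
      IsPartialSorting tgt fb m (Function.update C M ∅) ∧ SortingStep tgt fb C M := by
  constructor
  · rintro ⟨hstep, hempty⟩
    refine ⟨⟨fun i hi => ?_, fun i hi => ?_⟩, hstep M (by omega)⟩
    · exact (sortingStep_update_of_lt ∅ (Fin.lt_def.2 (by omega))).2 (hstep i (by omega))
    · rcases eq_or_ne i M with rfl | hne
      · exact Function.update_self ..
      · rw [Function.update_of_ne hne]
        exact hempty i (by have := Fin.val_ne_of_ne hne; omega)
  · rintro ⟨⟨hstep, hempty⟩, hM'⟩
    refine ⟨fun i hi => ?_, fun i hi => ?_⟩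
    · rcases eq_or_ne i M with rfl | hne
      · exact hM'
      · have hlt : i.val < m := by have := Fin.val_ne_of_ne hne; omega
        exact (sortingStep_update_of_lt ∅ (Fin.lt_def.2 (by omega))).1 (hstep i hlt)
    · have hne : i ≠ M := Fin.ne_of_val_ne (by omega)
      simpa [Function.update_of_ne hne] using hempty i (by omega)

theorem card_prevSet_union {m : ℕ} {C : Fin r → Finset E} {M : Fin r}
    (hC : IsPartialSorting tgt fb m C) (hM : M.val = m) :
    #(prevSet C M ∪ ({e | tgt e = M} : Finset E)) = prevFlow fb M + #{e | tgt e = M} := by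
  unfold prevSet prevFlow
  split_ifs with h0
  · simp
  · have hprev := hC.1 ⟨M.val - 1, lt_of_le_of_lt (Nat.sub_le _ _) M.isLt⟩ (by simp only; omega)
    rw [card_union_of_disjoint, hprev.1]
    refine disjoint_left.2 fun e he htgt => ?_
    have := Fin.le_def.1 (tgt_le_of_forall_sortingStep hC.1 (by simp only; omega) e he)
    rw [(mem_filter.1 htgt).2] at this
    simp only at this
    omega

theorem card_fiber_update_isPartialSorting {m : ℕ} {C : Fin r → Finset E} {M : Fin r}
    (hC : IsPartialSorting tgt fb m C) (hM : M.val = m) :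
    #{C' | IsPartialSorting tgt fb (m + 1) C' ∧ Function.update C' M ∅ = C} =
      (prevFlow fb M + #{e | tgt e = M}).choose (fb M) := by
  have hCM : C M = ∅ := hC.2 M hM.ge
  have hfiber : ({C' | IsPartialSorting tgt fb (m + 1) C' ∧ Function.update C' M ∅ = C} :
      Finset (Fin r → Finset E)) =
      (powersetCard (fb M) (prevSet C M ∪ ({e | tgt e = M} : Finset E))).image
        (Function.update C M) := by
    ext C'
    simp only [mem_filter, mem_univ, true_and, mem_image, mem_powersetCard,
      isPartialSorting_succ_iff hM]
    constructor
    · rintro ⟨⟨-, hcard, hsub⟩, rfl⟩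
      refine ⟨C' M, ⟨?_, hcard⟩, by simp⟩
      rwa [prevSet_update_of_le _ le_rfl]
    · rintro ⟨X, ⟨hsub, hcard⟩, rfl⟩
      have hupd : Function.update (Function.update C M X) M ∅ = C := by
        rw [Function.update_idem, ← hCM, Function.update_eq_self]
      refine ⟨⟨by rwa [hupd], ?_, ?_⟩, hupd⟩
      · rwa [Function.update_self]
      · rwa [Function.update_self, prevSet_update_of_le _ le_rfl]
  rw [hfiber, card_image_of_injective _ (Function.update_injective C M), card_powersetCard,
    card_prevSet_union hC hM]

theorem card_isPartialSorting {m : ℕ} (hm : m ≤ r) :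
    #{C | IsPartialSorting tgt fb m C} =
      ∏ i : Fin r with i.val < m, (prevFlow fb i + #{e | tgt e = i}).choose (fb i) := by
  induction m with
  | zero =>
    have : ({C | IsPartialSorting tgt fb 0 C} : Finset (Fin r → Finset E)) = {fun _ => ∅} := by
      ext C
      simp [IsPartialSorting, funext_iff]
    simp [this]
  | succ m ih =>
    set M : Fin r := ⟨m, hm⟩
    have hmaps : ∀ C ∈ ({C | IsPartialSorting tgt fb (m + 1) C} : Finset (Fin r → Finset E)),
        Function.update C M ∅ ∈ ({C | IsPartialSorting tgt fb m C} : Finset _) := fun C hC => by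
      simpa using ((isPartialSorting_succ_iff (M := M) rfl).1 (mem_filter.1 hC).2).1
    have hlt : univ.filter (fun i : Fin r => i.val < m + 1) =
        insert M (univ.filter fun i : Fin r => i.val < m) := by
      ext i
      simp only [mem_filter, mem_univ, true_and, mem_insert, Fin.ext_iff, M]
      omega
    rw [card_eq_sum_card_fiberwise hmaps, hlt, prod_insert (by simp [M]),
      ← ih (Nat.le_of_succ_le hm), mul_comm, ← smul_eq_mul, ← sum_const]
    refine sum_congr rfl fun C hC => ?_
    rw [filter_filter]
    exact card_fiber_update_isPartialSorting (mem_filter.1 hC).2 rfl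

theorem card_isSorting :
    #{C | IsSorting tgt fb C} = ∏ i, (prevFlow fb i + #{e | tgt e = i}).choose (fb i) := by
  have hiff : ∀ C, IsSorting tgt fb C ↔ IsPartialSorting tgt fb r C := fun C =>
    ⟨fun h => ⟨fun i _ => h i, fun i hi => absurd i.isLt hi.not_gt⟩, fun h i => h.1 i i.isLt⟩
  simp only [hiff, card_isPartialSorting le_rfl, Fin.is_lt, filter_true]

end Sorting

theorem card_filter_sigma_fst {ι : Type*} [Fintype ι] (fr : ι → ℕ) (p : ι → Prop)
    [DecidablePred p] : #{e : (w : ι) × Fin (fr w) | p e.1} = ∑ w with p w, fr w := by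
  rw [card_filter, ← univ_sigma_univ, sum_sigma, sum_filter]
  exact sum_congr rfl fun w _ => by split_ifs <;> simp

theorem filter_eq_neg_one_eq_filter_not {ι : Type*} {s : ι → ℤ} (hs : ∀ i, s i = 1 ∨ s i = -1)
    (A : Finset ι) : A.filter (s · = -1) = A.filter (¬ s · = 1) :=
  filter_congr fun i _ => by rcases hs i with h | h <;> simp [h]

section Weights

variable {K : Type*} [Field K]

theorem sum_pi_fin_zpow_sum {E : Type*} [Fintype E] [DecidableEq E] (t : K) (n : ℕ) :
    ∑ v : E → Fin n, t ^ (∑ e, ((v e : ℕ) : ℤ)) = (∑ k ∈ range n, t ^ k) ^ Fintype.card E := by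
  simp_rw [← Nat.cast_sum, zpow_natCast, ← prod_pow_eq_pow_sum]
  rw [← Fintype.prod_sum fun (_ : E) (k : Fin n) => t ^ (k : ℕ), Fin.sum_univ_eq_sum_range,
    prod_const, card_univ]

theorem one_sub_zpow_neg_natCast {t : K} (ht : t ≠ 0) (n : ℕ) :
    1 - t ^ (-(n : ℤ)) = (1 - t⁻¹) * t ^ (1 - (n : ℤ)) * ∑ k ∈ range n, t ^ k := by
  rw [zpow_sub₀ ht, zpow_one, zpow_neg, zpow_natCast]
  field_simp
  linear_combination -geom_sum_mul t n

theorem sum_label_weight {E : Type*} [Fintype E] [DecidableEq E] {σ : E → ℤ}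
    (hσ : ∀ e, σ e = 1 ∨ σ e = -1) {t : K} (ht : t ≠ 0) (n : ℕ) (c : K) :
    ∑ v : E → Fin n, c * (1 - t) ^ (#{e | σ e = -1} : ℕ) *
        t ^ (∑ e with σ e = -1, ((v e : ℕ) : ℤ)) * (1 - t⁻¹) ^ #{e | σ e = 1} *
        t ^ (-(#{e | σ e = 1} : ℤ) * ((n : ℤ) - 1) + ∑ e with σ e = 1, ((v e : ℕ) : ℤ)) =
      c * (1 - t ^ n) ^ #{e | σ e = -1} * (1 - t ^ (-(n : ℤ))) ^ #{e | σ e = 1} := by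
  set a := #{e | σ e = -1}
  set b := #{e | σ e = 1}
  have hcard : Fintype.card E = b + a := by
    rw [← card_univ, ← card_filter_add_card_filter_not (σ · = 1),
      ← filter_eq_neg_one_eq_filter_not hσ]
  have hsummand : ∀ v : E → Fin n,
      c * (1 - t) ^ a * t ^ (∑ e with σ e = -1, ((v e : ℕ) : ℤ)) * (1 - t⁻¹) ^ b *
        t ^ (-(b : ℤ) * ((n : ℤ) - 1) + ∑ e with σ e = 1, ((v e : ℕ) : ℤ)) =
      c * (1 - t) ^ a * (1 - t⁻¹) ^ b * (t ^ (1 - (n : ℤ))) ^ b *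
        t ^ (∑ e, ((v e : ℕ) : ℤ)) := by
    intro v
    rw [← sum_filter_add_sum_filter_not univ (σ · = 1), ← filter_eq_neg_one_eq_filter_not hσ,
      zpow_add₀ ht, zpow_add₀ ht, show -(b : ℤ) * ((n : ℤ) - 1) = (1 - n) * b by ring, zpow_mul,
      zpow_natCast]
    ring
  rw [sum_congr rfl fun v _ => hsummand v, ← mul_sum, sum_pi_fin_zpow_sum, hcard,
    ← mul_neg_geom_sum, one_sub_zpow_neg_natCast ht, mul_pow, mul_pow, mul_pow, pow_add]
  ring

end Weights

theorem prod_pow_mul_pow_of_sign {ι M : Type*} [Fintype ι] [CommMonoid M] {s : ι → ℤ}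
    (hs : ∀ i, s i = 1 ∨ s i = -1) (x y : ℤ → M) (a b : ι → ℕ) :
    ∏ i, x (s i) ^ a i * y (s i) ^ b i =
      x 1 ^ (∑ i with s i = 1, a i) * y 1 ^ (∑ i with s i = 1, b i) *
        (x (-1) ^ (∑ i with s i = -1, a i) * y (-1) ^ (∑ i with s i = -1, b i)) := by
  rw [← prod_filter_mul_prod_filter_not univ (s · = 1), ← filter_eq_neg_one_eq_filter_not hs]
  congr 1 <;>
  · rw [prod_congr rfl fun i hi => by rw [(mem_filter.1 hi).2], prod_mul_distrib,
      prod_pow_eq_pow_sum, prod_pow_eq_pow_sum]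

/-- For a flow `f` on a signed digraph with one blue and one red edge leaving each
vertex (blue flow `fb`, red flow `fr`, red targets `tr`, vertex signs `sign = ±1`),
the sum over all `n`-sortings `P = (C,v)` of the weight
`b(P) = t^{n(f_b⁻ - f_b⁺)} (1-t)^{f_r⁻} t^{f_r⁻(v)} (1-t⁻¹)^{f_r⁺} t^{-f_r⁺(n-1)+f_r⁺(v)}`
equals `mult(f) ⬝ β(f)|_{t → tⁿ}`, where `mult(f) = ∏_v C(f(v), f(e^b_v))` and `β(f)`
gives each blue edge leaving a vertex of sign `ε` the weight `t^{-ε}` and each red edge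
the weight `1 - t^{-ε}`. -/
theorem sum_n_sortings_eq_mult_beta {K : Type*} [Field K] (t : K) (ht : t ≠ 0)
    (r n : ℕ) (fb fr : Fin r → ℕ) (tr : Fin r → Fin r) (sign : Fin r → ℤ)
    (hsign : ∀ w, sign w = 1 ∨ sign w = -1)
    (h0 : ∀ i : Fin r, i.val = 0 →
      (∑ w ∈ Finset.univ.filter (fun w => tr w = i), fr w) = fb i + fr i)
    (hcons : ∀ i : Fin r, 0 < i.val →
      fb i + fr i =
        fb ⟨i.val - 1, lt_of_le_of_lt (Nat.sub_le _ _) i.isLt⟩ +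
          ∑ w ∈ Finset.univ.filter (fun w => tr w = i), fr w) :
    let E := (w : Fin r) × Fin (fr w)
    let tgt : E → Fin r := fun e => tr e.1
    let fbp : ℕ := ∑ w ∈ Finset.univ.filter (fun w => sign w = 1), fb w
    let fbm : ℕ := ∑ w ∈ Finset.univ.filter (fun w => sign w = -1), fb w
    let frp : ℕ := ∑ w ∈ Finset.univ.filter (fun w => sign w = 1), fr w
    let frm : ℕ := ∑ w ∈ Finset.univ.filter (fun w => sign w = -1), fr w
    ∑ P ∈ Finset.univ.filter
        (fun P : (Fin r → Finset E) × (E → Fin n) => IsSorting tgt fb P.1),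
      t ^ ((n : ℤ) * ((fbm : ℤ) - (fbp : ℤ))) * (1 - t) ^ frm *
        t ^ (∑ e ∈ Finset.univ.filter (fun e : E => sign e.1 = -1), ((P.2 e : ℕ) : ℤ)) *
        (1 - t⁻¹) ^ frp *
        t ^ (-(frp : ℤ) * ((n : ℤ) - 1) +
              ∑ e ∈ Finset.univ.filter (fun e : E => sign e.1 = 1), ((P.2 e : ℕ) : ℤ))
      = (∏ w : Fin r, ((fb w + fr w).choose (fb w) : K)) *
          ∏ w : Fin r,
            (t ^ (-(sign w) * (n : ℤ))) ^ (fb w) *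
              (1 - t ^ (-(sign w) * (n : ℤ))) ^ (fr w) := by
  intro E tgt fbp fbm frp frm
  have hcount : #{C | IsSorting tgt fb C} = ∏ w, (fb w + fr w).choose (fb w) := by
    rw [card_isSorting]
    refine prod_congr rfl fun i _ => ?_
    rw [card_filter_sigma_fst fr (tr · = i), prevFlow]
    split_ifs with hi
    · rw [zero_add, h0 i hi]
    · rw [hcons i (Nat.pos_of_ne_zero hi)]
  have hfrp : frp = #{e : E | sign e.1 = 1} := (card_filter_sigma_fst fr _).symm
  have hfrm : frm = #{e : E | sign e.1 = -1} := (card_filter_sigma_fst fr _).symm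
  have hblue :
      t ^ ((n : ℤ) * ((fbm : ℤ) - (fbp : ℤ))) = (t ^ (-(n : ℤ))) ^ fbp * (t ^ n) ^ fbm := by
    rw [← zpow_natCast, ← zpow_natCast (t ^ n), ← zpow_natCast t n, ← zpow_mul, ← zpow_mul,
      ← zpow_add₀ ht]
    ring_nf
  rw [← univ_product_univ, filter_product_left (IsSorting tgt fb), sum_product]
  simp only [sum_const, nsmul_eq_mul]
  rw [hcount, Nat.cast_prod, hfrp, hfrm,
    sum_label_weight (σ := fun e : E => sign e.1) (fun e => hsign e.1) ht, ← hfrp, ← hfrm, hblue,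
    prod_pow_mul_pow_of_sign hsign (fun ε : ℤ => t ^ (-ε * (n : ℤ)))
      (fun ε : ℤ => 1 - t ^ (-ε * (n : ℤ)))]
  simp only [neg_neg, one_mul, neg_one_mul, zpow_natCast]
  ring
end

section
/- For natural numbers n ≥ m and a commutative ring element t, (1-t)^m ∑_{(v_1,...,v_m) distinct in {0,...,n-1}} t^{v_1 - d_1}···t^{v_m - d_m} = ∏_{j=0}^{m-1}(1 - t^{n-j}), where d_i = #{j < i : v_j < v_i}. -/
open scoped Classical
open Finset

lemma card_filter_lt_fin {N : ℕ} (k : Fin N) :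
    (Finset.univ.filter (· < k)).card = (k : ℕ) := by
  have : Finset.univ.filter (· < k) = Finset.Iio k := by ext x; simp
  rw [this, Fin.card_Iio]

lemma lemA {R : Type*} [CommRing R] (t : R) {n : ℕ} (S : Finset (Fin n)) :
    ∑ k ∈ Sᶜ, t ^ ((k : ℕ) - (S.filter (· < k)).card)
      = ∑ i ∈ Finset.range (n - S.card), t ^ i := by
  -- rewrite exponent as card of complement filter
  have hexp : ∀ k ∈ Sᶜ, (k : ℕ) - (S.filter (· < k)).card
      = (Sᶜ.filter (· < k)).card := by
    intro k hk
    have hu : (S.filter (· < k)) ∪ (Sᶜ.filter (· < k)) = Finset.univ.filter (· < k) := by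
      rw [← Finset.filter_union, Finset.union_compl]
    have hdisj : Disjoint (S.filter (· < k)) (Sᶜ.filter (· < k)) :=
      Finset.disjoint_filter_filter disjoint_compl_right
    have hsplit : (S.filter (· < k)).card + (Sᶜ.filter (· < k)).card
        = (Finset.univ.filter (· < k)).card := by
      rw [← Finset.card_union_of_disjoint hdisj, hu]
    have := card_filter_lt_fin k
    omega
  rw [Finset.sum_congr rfl (fun k hk => by rw [hexp k hk])]
  -- now sum over Sᶜ via its order iso
  have hc : Sᶜ.card = n - S.card := by
    have := Finset.card_compl S
    simpa using this
  set c := Sᶜ.card with hcdef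
  have e := Sᶜ.orderEmbOfFin (rfl : Sᶜ.card = c)
  have hmem : ∀ i : Fin c, Sᶜ.orderEmbOfFin rfl i ∈ Sᶜ :=
    fun i => Finset.orderEmbOfFin_mem _ _ _
  have key : ∀ i : Fin c, (Sᶜ.filter (· < Sᶜ.orderEmbOfFin rfl i)).card = (i : ℕ) := by
    intro i
    have himg : Sᶜ.filter (· < Sᶜ.orderEmbOfFin rfl i)
        = (Finset.univ.filter (· < i)).image (Sᶜ.orderEmbOfFin rfl) := by
      ext x
      simp only [Finset.mem_filter, Finset.mem_image, Finset.mem_univ, true_and]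
      constructor
      · rintro ⟨hx, hlt⟩
        have : x ∈ Set.range (Sᶜ.orderEmbOfFin rfl) := by
          rw [Finset.range_orderEmbOfFin]; exact hx
        obtain ⟨j, rfl⟩ := this
        exact ⟨j, by rwa [(Sᶜ.orderEmbOfFin rfl).lt_iff_lt] at hlt, rfl⟩
      · rintro ⟨j, hj, rfl⟩
        exact ⟨Finset.orderEmbOfFin_mem _ _ _, (Sᶜ.orderEmbOfFin rfl).lt_iff_lt.2 hj⟩
    rw [himg, Finset.card_image_of_injective _ (Sᶜ.orderEmbOfFin rfl).injective,
      card_filter_lt_fin]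
  rw [← hc]
  rw [← Fin.sum_univ_eq_sum_range (fun i => t ^ i) c]
  have hcardlt : ∀ k ∈ Sᶜ, (Sᶜ.filter (· < k)).card < c := by
    intro k hk
    refine Finset.card_lt_card ⟨Finset.filter_subset _ _, fun hsub => ?_⟩
    have := hsub hk
    simp at this
  have mono : ∀ x ∈ Sᶜ, ∀ y ∈ Sᶜ, x < y →
      (Sᶜ.filter (· < x)).card < (Sᶜ.filter (· < y)).card := by
    intro x hx y hy hxy
    refine Finset.card_lt_card ⟨fun a ha => ?_, fun hsub => ?_⟩
    · simp only [Finset.mem_filter] at ha ⊢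
      exact ⟨ha.1, lt_trans ha.2 hxy⟩
    · have := hsub (Finset.mem_filter.2 ⟨hx, hxy⟩)
      simp at this
  have injOn : ∀ x ∈ Sᶜ, ∀ y ∈ Sᶜ,
      (Sᶜ.filter (· < x)).card = (Sᶜ.filter (· < y)).card → x = y := by
    intro x hx y hy hxy
    rcases lt_trichotomy x y with h | h | h
    · exact absurd hxy (mono x hx y hy h).ne
    · exact h
    · exact absurd hxy.symm (mono y hy x hx h).ne
  obtain hc0 | hc0 := Nat.eq_zero_or_pos c
  · have h1 : Sᶜ = ∅ := Finset.card_eq_zero.mp (hcdef ▸ hc0)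
    rw [h1, Finset.sum_empty, Fin.sum_univ_eq_sum_range, hc0]
    simp
  refine Finset.sum_nbij' (fun k => if hk : k ∈ Sᶜ then ⟨(Sᶜ.filter (· < k)).card, hcardlt k hk⟩ else ⟨0, hc0⟩)
    (fun i => Sᶜ.orderEmbOfFin rfl i)
    (fun k hk => Finset.mem_univ _) (fun i _ => hmem i) ?_ ?_ ?_
  · intro k hk
    simp only [hk, dif_pos]
    exact injOn _ (hmem _) _ hk (key ⟨_, hcardlt k hk⟩)
  · intro i _
    simp only [hmem i, dif_pos]
    exact Fin.ext (key i)
  · intro k hk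
    simp only [hk, dif_pos]
open Finset Function

lemma snoc_inj {m n : ℕ} {w : Fin m → Fin n} {k : Fin n}
    (hw : Injective w) (hk' : ∀ i, w i ≠ k) : Injective (Fin.snoc w k) := by
  intro a b hab
  rcases Fin.eq_castSucc_or_eq_last a with ⟨a', rfl⟩ | rfl <;>
    rcases Fin.eq_castSucc_or_eq_last b with ⟨b', rfl⟩ | rfl
  · simp only [Fin.snoc_castSucc] at hab
    exact congrArg Fin.castSucc (hw hab)
  · simp only [Fin.snoc_castSucc, Fin.snoc_last] at hab
    exact absurd hab (hk' a')
  · simp only [Fin.snoc_castSucc, Fin.snoc_last] at hab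
    exact absurd hab.symm (hk' b')
  · rfl

lemma snoc_eta {m : ℕ} {α : Type*} (v : Fin (m + 1) → α) :
    Fin.snoc (v ∘ Fin.castSucc) (v (Fin.last m)) = v := by
  funext i
  refine Fin.lastCases ?_ ?_ i
  · simp [Fin.snoc_last]
  · intro j; simp [Fin.snoc_castSucc]

lemma d_castSucc {m n : ℕ} (w : Fin m → Fin n) (k : Fin n) (i : Fin m) :
    (Finset.univ.filter (fun j : Fin (m + 1) =>
        j < Fin.castSucc i ∧ (Fin.snoc w k : Fin (m+1) → Fin n) j <
          (Fin.snoc w k : Fin (m+1) → Fin n) (Fin.castSucc i))).card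
      = (Finset.univ.filter (fun j : Fin m => j < i ∧ w j < w i)).card := by
  have himg : Finset.univ.filter (fun j : Fin (m + 1) =>
        j < Fin.castSucc i ∧ (Fin.snoc w k : Fin (m+1) → Fin n) j <
          (Fin.snoc w k : Fin (m+1) → Fin n) (Fin.castSucc i))
      = (Finset.univ.filter (fun j : Fin m => j < i ∧ w j < w i)).image Fin.castSucc := by
    ext x
    simp only [Finset.mem_filter, Finset.mem_image, Finset.mem_univ, true_and,
      Fin.snoc_castSucc]
    constructor
    · rintro ⟨hlt, hval⟩
      have hne : x ≠ Fin.last m := by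
        intro h; subst h
        exact absurd (lt_of_lt_of_le hlt (Fin.le_last _)) (lt_irrefl _)
      obtain ⟨j, rfl⟩ := Fin.exists_castSucc_eq.2 hne
      refine ⟨j, ⟨Fin.castSucc_lt_castSucc_iff.1 hlt, ?_⟩, rfl⟩
      rwa [Fin.snoc_castSucc] at hval
    · rintro ⟨j, ⟨hji, hwj⟩, rfl⟩
      exact ⟨Fin.castSucc_lt_castSucc_iff.2 hji, by rwa [Fin.snoc_castSucc]⟩
  rw [himg, Finset.card_image_of_injective _ (Fin.castSucc_injective m)]

lemma d_last {m n : ℕ} (w : Fin m → Fin n) (k : Fin n) (hw : Injective w) :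
    (Finset.univ.filter (fun j : Fin (m + 1) =>
        j < Fin.last m ∧ (Fin.snoc w k : Fin (m+1) → Fin n) j <
          (Fin.snoc w k : Fin (m+1) → Fin n) (Fin.last m))).card
      = ((Finset.univ.image w).filter (· < k)).card := by
  have himg : Finset.univ.filter (fun j : Fin (m + 1) =>
        j < Fin.last m ∧ (Fin.snoc w k : Fin (m+1) → Fin n) j <
          (Fin.snoc w k : Fin (m+1) → Fin n) (Fin.last m))
      = (Finset.univ.filter (fun j : Fin m => w j < k)).image Fin.castSucc := by
    ext x
    simp only [Finset.mem_filter, Finset.mem_image, Finset.mem_univ, true_and,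
      Fin.snoc_last]
    constructor
    · rintro ⟨hlt, hval⟩
      obtain ⟨j, rfl⟩ := Fin.exists_castSucc_eq.2 hlt.ne
      refine ⟨j, ?_, rfl⟩
      rwa [Fin.snoc_castSucc] at hval
    · rintro ⟨j, hwj, rfl⟩
      exact ⟨Fin.castSucc_lt_last j, by rwa [Fin.snoc_castSucc]⟩
  have himg2 : (Finset.univ.image w).filter (· < k)
      = (Finset.univ.filter (fun j : Fin m => w j < k)).image w := by
    rw [Finset.filter_image]
  rw [himg, himg2, Finset.card_image_of_injective _ (Fin.castSucc_injective m),
    Finset.card_image_of_injective _ hw]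

lemma sum_inj {R : Type*} [CommRing R] (t : R) (n : ℕ) :
    ∀ m : ℕ, m ≤ n →
    ∑ v ∈ Finset.univ.filter (fun v : Fin m → Fin n => Function.Injective v),
        ∏ i : Fin m,
          t ^ ((v i : ℕ) - (Finset.univ.filter
            (fun j : Fin m => j < i ∧ v j < v i)).card)
      = ∏ j ∈ Finset.range m, ∑ i ∈ Finset.range (n - j), t ^ i := by
  intro m
  induction m with
  | zero =>
    intro _
    have h : (Finset.univ.filter (fun v : Fin 0 → Fin n => Function.Injective v))
        = Finset.univ := by
      apply Finset.filter_true_of_mem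
      intro v _ a b _
      exact Subsingleton.elim a b
    rw [h]
    simp
  | succ m ih =>
    intro hmn
    have hm : m ≤ n := Nat.le_of_succ_le hmn
    -- reindex the sum via snoc
    rw [show (Finset.univ.filter (fun v : Fin (m+1) → Fin n => Function.Injective v)) =
      ((Finset.univ.filter (fun w : Fin m → Fin n => Function.Injective w)).sigma
        (fun w => (Finset.univ.image w)ᶜ)).image (fun p => Fin.snoc p.1 p.2) from ?_]
    · rw [Finset.sum_image ?hinj]
      case hinj =>
        rintro ⟨w₁, k₁⟩ h₁ ⟨w₂, k₂⟩ h₂ heq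
        have h1 : w₁ = w₂ := by
          have := congrArg (fun v => v ∘ Fin.castSucc) heq
          simpa [funext_iff, Fin.snoc_castSucc] using this
        have h2 : k₁ = k₂ := by
          have := congrArg (fun v => v (Fin.last m)) heq
          simpa [Fin.snoc_last] using this
        simp [h1, h2]
      rw [Finset.sum_sigma]
      rw [Finset.prod_range_succ]
      rw [← ih hm, Finset.sum_mul]
      refine Finset.sum_congr rfl ?_
      intro w hw
      have hwinj : Injective w := (Finset.mem_filter.1 hw).2
      have hcard : (Finset.univ.image w).card = m := by
        rw [Finset.card_image_of_injective _ hwinj, Finset.card_univ, Fintype.card_fin]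
      -- inner sum
      have hsplit : ∀ k : Fin n,
          (∏ i : Fin (m+1), t ^ (((Fin.snoc w k : Fin (m+1) → Fin n) i : ℕ) -
            (Finset.univ.filter (fun j : Fin (m+1) => j < i ∧
              (Fin.snoc w k : Fin (m+1) → Fin n) j < (Fin.snoc w k : Fin (m+1) → Fin n) i)).card))
          = (∏ i : Fin m, t ^ ((w i : ℕ) - (Finset.univ.filter
              (fun j : Fin m => j < i ∧ w j < w i)).card)) *
            t ^ ((k : ℕ) - ((Finset.univ.image w).filter (· < k)).card) := by
        intro k
        rw [Fin.prod_univ_castSucc]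
        congr 1
        · refine Finset.prod_congr rfl ?_
          intro i _
          rw [d_castSucc, Fin.snoc_castSucc]
        · rw [d_last w k hwinj, Fin.snoc_last]
      calc ∑ k ∈ (Finset.univ.image w)ᶜ,
            ∏ i : Fin (m+1), t ^ (((Fin.snoc w k : Fin (m+1) → Fin n) i : ℕ) -
              (Finset.univ.filter (fun j : Fin (m+1) => j < i ∧
                (Fin.snoc w k : Fin (m+1) → Fin n) j <
                (Fin.snoc w k : Fin (m+1) → Fin n) i)).card)
          = ∑ k ∈ (Finset.univ.image w)ᶜ,
            (∏ i : Fin m, t ^ ((w i : ℕ) - (Finset.univ.filter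
              (fun j : Fin m => j < i ∧ w j < w i)).card)) *
              t ^ ((k : ℕ) - ((Finset.univ.image w).filter (· < k)).card) := by
            exact Finset.sum_congr rfl (fun k _ => hsplit k)
        _ = (∏ i : Fin m, t ^ ((w i : ℕ) - (Finset.univ.filter
              (fun j : Fin m => j < i ∧ w j < w i)).card)) *
            ∑ k ∈ (Finset.univ.image w)ᶜ,
              t ^ ((k : ℕ) - ((Finset.univ.image w).filter (· < k)).card) := by
            rw [Finset.mul_sum]
        _ = _ := by rw [lemA t (Finset.univ.image w), hcard]
    · -- the image identity
      ext v
      simp only [Finset.mem_image, Finset.mem_filter, Finset.mem_univ, true_and,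
        Finset.mem_sigma, Finset.mem_compl]
      constructor
      · intro hv
        refine ⟨⟨v ∘ Fin.castSucc, v (Fin.last m)⟩,
          ⟨hv.comp (Fin.castSucc_injective m), ?_⟩, snoc_eta v⟩
        rintro ⟨j, hj⟩
        exact absurd (hv hj) (Fin.castSucc_lt_last j).ne
      · rintro ⟨⟨w, k⟩, ⟨hwinj, hk⟩, rfl⟩
        exact snoc_inj hwinj (fun i hi => hk ⟨i, hi⟩)

/-- For `m ≤ n`:
`(1-t)^m ∑_{(v₁,…,v_m) distinct in {0,…,n-1}} t^{v₁-d₁} ⋯ t^{v_m-d_m}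
 = ∏_{j=0}^{m-1} (1 - t^{n-j})`, where `d_i = #{j < i : v_j < v_i}`. -/
theorem distinct_tuples_sum_eq_prod {R : Type*} [CommRing R] (t : R)
    (n m : ℕ) (hmn : m ≤ n) :
    (1 - t) ^ m *
      ∑ v ∈ Finset.univ.filter (fun v : Fin m → Fin n => Function.Injective v),
        ∏ i : Fin m,
          t ^ ((v i : ℕ) - (Finset.univ.filter
            (fun j : Fin m => j < i ∧ v j < v i)).card)
      = ∏ j ∈ Finset.range m, (1 - t ^ (n - j)) := by
  rw [sum_inj t n m hmn,
    show (1 - t) ^ m = ∏ _j ∈ Finset.range m, (1 - t) by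
      rw [Finset.prod_const, Finset.card_range],
    ← Finset.prod_mul_distrib]
  refine Finset.prod_congr rfl ?_
  intro j _
  have h := geom_sum_mul t (n - j)
  linear_combination -h
end

section
/- (Classical MacMahon Master Theorem / boson-fermion correspondence) For an r×r matrix A over a commutative ring, 1/det(I - A) = ∑_{n=0}^∞ tr S^n(A), where S^n(A) is the n-th symmetric power of A. -/
/-!
Both sides are compatible with ring homomorphisms, and `tr Sⁿ` is invariant under conjugation
because `B ↦ Sⁿ(B)` is multiplicative. Over an algebraically closed field we may therefore
conjugate `B` so that its first column is `(λ, 0, …, 0)` for an eigenvalue `λ`. Expanding along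
that column gives `det (1 - tB) = (1 - λt) · det (1 - tB')` for the lower right block `B'`, and
splitting off the exponent of the first variable gives
`Σₙ tr Sⁿ(B) tⁿ = (Σₐ λᵃ tᵃ) · Σₙ tr Sⁿ(B') tⁿ`, so `det (1 - tB) · Σₙ tr Sⁿ(B) tⁿ = 1` follows by
induction on the size. Embedding a domain into an algebraically closed field, this holds for the
generic matrix `A` over `ℚ[a_ij]`. There the coefficient of `tᵏ` in `det (1 - tA)` is the
degree-`k` part of `det (1 - A)`, so comparing coefficients of `t^N` gives the degree-`N` part of
the identity of power series in the entries.
-/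

open scoped Classical

open Finset MvPolynomial

theorem Finset.sum_finsuppAntidiag_univ_fin_succ {M : Type*} [AddCommMonoid M] {s : ℕ} (n : ℕ)
    (f : (Fin (s + 1) →₀ ℕ) → M) :
    ∑ e ∈ finsuppAntidiag univ n, f e =
      ∑ p ∈ antidiagonal n, ∑ t ∈ finsuppAntidiag univ p.2, f (Finsupp.cons p.1 t) := by
  rw [sum_sigma']
  refine sum_nbij' (fun e => ⟨(e 0, ∑ i : Fin s, e i.succ), e.tail⟩)
    (fun x => Finsupp.cons x.1.1 x.2) (fun e he => ?_) (fun x hx => ?_)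
    (fun e _ => Finsupp.cons_tail e) (fun x hx => ?_) (fun e _ => by rw [Finsupp.cons_tail])
  · simp_all only [mem_finsuppAntidiag, Fin.sum_univ_succ, subset_univ, and_true, mem_sigma,
      HasAntidiagonal.mem_antidiagonal, true_and]
    rfl
  · simp_all [Fin.sum_univ_succ]
  · simp_all

theorem Finset.sum_finsuppAntidiag_univ_eq_sum_filter {ι M : Type*} [Fintype ι] [DecidableEq ι]
    [AddCommMonoid M] (n : ℕ) (f : (ι →₀ ℕ) → M) :
    ∑ e ∈ finsuppAntidiag univ n, f e =
      ∑ d ∈ univ.filter (fun d : ι → Fin (n + 1) => ∑ i, (d i : ℕ) = n),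
        f (Finsupp.equivFunOnFinite.symm fun i => d i) := by
  symm
  refine sum_bij (fun d _ => Finsupp.equivFunOnFinite.symm fun i => d i) (fun d hd => ?_)
    (fun d _ d' _ h => ?_) (fun e he => ?_) (fun _ _ => rfl)
  · simpa using hd
  · funext i
    exact Fin.ext (by simpa using DFunLike.congr_fun h i)
  · have he : ∑ i, e i = n := by simpa using he
    have hle (i : ι) : e i < n + 1 :=
      Nat.lt_succ_of_le (he ▸ single_le_sum (fun _ _ => Nat.zero_le _) (mem_univ i))
    exact ⟨fun i => ⟨e i, hle i⟩, by simpa using he, by ext; simp⟩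

namespace MvPolynomial

variable {σ R : Type*} [CommSemiring R]

theorem coeff_aeval_C_mul_X (P : MvPolynomial σ R) (k : ℕ) :
    (aeval (fun i => Polynomial.C (X i) * Polynomial.X) P).coeff k =
      homogeneousComponent k P := by
  induction P using MvPolynomial.induction_on' with
  | monomial d c =>
    have : aeval (fun i => Polynomial.C (X i) * Polynomial.X) (monomial d c) =
        Polynomial.C (monomial d c : MvPolynomial σ R) * Polynomial.X ^ d.degree := by
      rw [aeval_monomial, Finsupp.prod]
      simp_rw [mul_pow, prod_mul_distrib, prod_pow_eq_pow_sum, ← map_pow, ← map_prod]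
      rw [← mul_assoc, Finsupp.degree_apply, Polynomial.algebraMap_apply, ← map_mul,
        monomial_eq, Finsupp.prod]
      rfl
    rw [this, Polynomial.coeff_C_mul_X_pow,
      homogeneousComponent_of_mem (isHomogeneous_monomial c rfl)]
  | add p q hp hq => rw [map_add, Polynomial.coeff_add, hp, hq, map_add]

theorem IsHomogeneous.aeval_C_mul_X {P : MvPolynomial σ R} {n : ℕ} (hP : P.IsHomogeneous n) :
    MvPolynomial.aeval (fun i => Polynomial.C (X i) * Polynomial.X) P =
      Polynomial.C P * Polynomial.X ^ n := by
  ext k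
  rw [coeff_aeval_C_mul_X, homogeneousComponent_of_mem hP, Polynomial.coeff_C_mul_X_pow]

theorem IsHomogeneous.eq_sum_finsuppAntidiag [Fintype σ] [DecidableEq σ] {P : MvPolynomial σ R}
    {n : ℕ} (hP : P.IsHomogeneous n) :
    P = ∑ f ∈ univ.finsuppAntidiag n, monomial f (coeff f P) := by
  conv_lhs => rw [P.as_sum]
  refine sum_subset (fun f hf => ?_) (fun f _ hf => by rw [notMem_support_iff.mp hf, monomial_zero])
  rw [mem_finsuppAntidiag, ← Finsupp.degree_eq_sum]
  exact ⟨(hP.degree_eq_sum_deg_support hf).symm, subset_univ _⟩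

theorem finSuccEquiv_C {s : ℕ} (a : R) : finSuccEquiv R s (C a) = Polynomial.C (C a) :=
  (finSuccEquiv R s).commutes a

end MvPolynomial

/-- `∑ₙ homogeneousComponent n (h n)`, i.e. the power series `∑ₙ hₙ` when each `hₙ` is
homogeneous of degree `n`. -/
noncomputable def MvPowerSeries.sumHomogeneousComponent {σ R : Type*} [CommSemiring R]
    (h : ℕ → MvPolynomial σ R) : MvPowerSeries σ R :=
  fun e => MvPolynomial.coeff e (h e.degree)

@[simp]
theorem MvPowerSeries.coeff_sumHomogeneousComponent {σ R : Type*} [CommSemiring R]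
    (h : ℕ → MvPolynomial σ R) (e : σ →₀ ℕ) :
    coeff e (sumHomogeneousComponent h) = MvPolynomial.coeff e (h e.degree) :=
  rfl

theorem MvPolynomial.coe_mul_sumHomogeneousComponent_eq_one {σ R : Type*} [CommSemiring R]
    (D : MvPolynomial σ R) (h : ℕ → MvPolynomial σ R)
    (hD : PowerSeries.mk (homogeneousComponent · D) * PowerSeries.mk h = 1) :
    (D : MvPowerSeries σ R) * MvPowerSeries.sumHomogeneousComponent h = 1 := by
  ext e
  have hN := congrArg (fun F => coeff e (PowerSeries.coeff e.degree F)) hD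
  simp only [PowerSeries.coeff_mul, PowerSeries.coeff_mk, PowerSeries.coeff_one, coeff_sum,
    coeff_mul, coeff_homogeneousComponent, apply_ite (coeff e), coeff_one, coeff_zero,
    Finsupp.degree_eq_zero_iff, @eq_comm _ (0 : σ →₀ ℕ), ← ite_and, and_self] at hN
  rw [MvPowerSeries.coeff_mul, MvPowerSeries.coeff_one, ← hN, sum_comm]
  refine sum_congr rfl fun pq hpq => ?_
  have hdeg : pq.1.degree + pq.2.degree = e.degree := by
    rw [← map_add, HasAntidiagonal.mem_antidiagonal.mp hpq]
  -- of the terms `(k, m)`, only `k = deg p` survives, and then `m = deg q`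
  rw [sum_eq_single (pq.1.degree, pq.2.degree) (fun km hkm hne => ?_) (fun h => ?_)]
  · simp
  · obtain ⟨k, m⟩ := km
    have hkm : k + m = e.degree := HasAntidiagonal.mem_antidiagonal.mp hkm
    rw [if_neg fun hk => hne (by simp only [Prod.mk.injEq]; omega), zero_mul]
  · exact absurd (HasAntidiagonal.mem_antidiagonal.mpr hdeg) h

theorem PowerSeries.one_sub_C_mul_X_mul_mk_pow {R : Type*} [CommRing R] (a : R) :
    (1 - C a * X) * mk (a ^ ·) = 1 := by
  have := congrArg (rescale a) (mk_one_mul_one_sub_eq_one (S := R))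
  simpa [rescale_X, rescale_mk, mul_comm] using this

namespace Matrix

section Semiring

variable {ι S : Type*} [Fintype ι] [CommSemiring S]

noncomputable def linearSubst (B : Matrix ι ι S) :
    MvPolynomial ι S →ₐ[S] MvPolynomial ι S :=
  aeval fun i => ∑ j, C (B i j) * X j

@[simp]
theorem linearSubst_X (B : Matrix ι ι S) (i : ι) :
    linearSubst B (X i) = ∑ j, C (B i j) * X j :=
  aeval_X _ _

@[simp]
theorem linearSubst_C (B : Matrix ι ι S) (a : S) : linearSubst B (C a) = C a :=
  aeval_C _ _

theorem linearSubst_mul (B B' : Matrix ι ι S) :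
    linearSubst (B * B') = (linearSubst B').comp (linearSubst B) := by
  refine algHom_ext fun i => ?_
  rw [AlgHom.comp_apply, linearSubst_X, linearSubst_X, map_sum]
  simp only [mul_apply, map_sum, sum_mul, map_mul, linearSubst_C, linearSubst_X, mul_sum,
    ← mul_assoc]
  exact sum_comm

@[simp]
theorem linearSubst_one [DecidableEq ι] : linearSubst (1 : Matrix ι ι S) = AlgHom.id S _ := by
  refine algHom_ext fun i => ?_
  simp [one_apply]

theorem linearSubst_monomial_one (B : Matrix ι ι S) (e : ι →₀ ℕ) :
    linearSubst B (monomial e 1) = ∏ i, linearSubst B (X i) ^ e i := by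
  rw [linearSubst, aeval_monomial, map_one, one_mul, Finsupp.prod_fintype _ _ fun _ => pow_zero _]
  simp

theorem isHomogeneous_linearSubst_monomial (B : Matrix ι ι S) (d : ι →₀ ℕ) :
    (linearSubst B (monomial d 1)).IsHomogeneous d.degree := by
  have := (isHomogeneous_monomial (d := d) (1 : S) rfl).aeval (fun i => ∑ j, C (B i j) * X j)
    fun i => IsHomogeneous.sum univ _ _ fun j _ => isHomogeneous_C_mul_X (B i j) j
  rwa [one_mul] at this

theorem map_linearSubst {T : Type*} [CommSemiring T] (f : S →+* T) (B : Matrix ι ι S)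
    (p : MvPolynomial ι S) :
    MvPolynomial.map f (linearSubst B p) = linearSubst (B.map f) (MvPolynomial.map f p) := by
  induction p using MvPolynomial.induction_on with
  | C a => simp [linearSubst]
  | add p q hp hq => simp [hp, hq]
  | mul_X p i hp => simp [hp]

variable [DecidableEq ι]

/-- The matrix of the `n`-th symmetric power of `B` in the basis of monomials of degree `n`. -/
noncomputable def symPow (n : ℕ) (B : Matrix ι ι S) :
    Matrix (finsuppAntidiag (univ : Finset ι) n) (finsuppAntidiag (univ : Finset ι) n) S :=
  of fun d e => coeff (e : ι →₀ ℕ) (linearSubst B (monomial d 1))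

theorem symPow_mul (n : ℕ) (B B' : Matrix ι ι S) :
    symPow n (B * B') = symPow n B * symPow n B' := by
  ext d e
  have hd : (d : ι →₀ ℕ).degree = n := by
    rw [Finsupp.degree_eq_sum]
    exact (mem_finsuppAntidiag.mp d.2).1
  have hmon (f : ι →₀ ℕ) (c : S) : monomial f c = c • monomial f 1 := by
    rw [smul_monomial, smul_eq_mul, mul_one]
  rw [symPow, of_apply, linearSubst_mul, AlgHom.comp_apply,
    (isHomogeneous_linearSubst_monomial B d).eq_sum_finsuppAntidiag, hd, map_sum, coeff_sum,
    mul_apply, ← sum_coe_sort]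
  refine sum_congr rfl fun f _ => ?_
  rw [hmon, map_smul, coeff_smul, smul_eq_mul]
  rfl

@[simp]
theorem symPow_one (n : ℕ) : symPow n (1 : Matrix ι ι S) = 1 := by
  ext d e
  simp only [symPow, of_apply, linearSubst_one, AlgHom.id_apply, coeff_monomial, one_apply,
    Subtype.ext_iff]

theorem trace_symPow_conj (n : ℕ) (B : Matrix ι ι S) {P Q : Matrix ι ι S} (hQP : Q * P = 1) :
    (symPow n (P * B * Q)).trace = (symPow n B).trace := by
  rw [symPow_mul, symPow_mul, trace_mul_cycle, ← symPow_mul, hQP, symPow_one, Matrix.one_mul]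

theorem trace_symPow (n : ℕ) (B : Matrix ι ι S) :
    (symPow n B).trace = ∑ e ∈ univ.finsuppAntidiag n, coeff e (linearSubst B (monomial e 1)) :=
  sum_coe_sort _ (fun e => coeff e (linearSubst B (monomial e 1)))

theorem map_trace_symPow {T : Type*} [CommSemiring T] (f : S →+* T) (n : ℕ)
    (B : Matrix ι ι S) : f (symPow n B).trace = (symPow n (B.map f)).trace := by
  simp only [trace_symPow, map_sum, ← coeff_map, map_linearSubst, map_monomial, map_one]

end Semiring

section ColZero

variable {S : Type*} [CommSemiring S] {s : ℕ} (B : Matrix (Fin (s + 1)) (Fin (s + 1)) S)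

theorem finSuccEquiv_linearSubst_X_zero :
    finSuccEquiv S s (linearSubst B (X 0)) =
      Polynomial.C (C (B 0 0)) * Polynomial.X + Polynomial.C (∑ j, C (B 0 j.succ) * X j) := by
  simp [Fin.sum_univ_succ, finSuccEquiv_X_zero, finSuccEquiv_X_succ, finSuccEquiv_C]

theorem finSuccEquiv_linearSubst_X_succ (hB : ∀ i : Fin s, B i.succ 0 = 0) (i : Fin s) :
    finSuccEquiv S s (linearSubst B (X i.succ)) =
      Polynomial.C (linearSubst (B.submatrix Fin.succ Fin.succ) (X i)) := by
  simp [Fin.sum_univ_succ, finSuccEquiv_X_succ, finSuccEquiv_C, hB]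

/-- Under `finSuccEquiv`, `x₀` becomes the polynomial variable. Only the image of `x₀` involves
it, linearly with coefficient `B 0 0`, so the `x₀ ^ (e 0)`-coefficient of the image of `x ^ e` is
`B 0 0 ^ e 0` times the image of the remaining monomial under the lower right block. -/
theorem coeff_linearSubst_monomial_self_of_col_zero (hB : ∀ i : Fin s, B i.succ 0 = 0)
    (e : Fin (s + 1) →₀ ℕ) :
    coeff e (linearSubst B (monomial e 1)) =
      B 0 0 ^ e 0 *
        coeff e.tail (linearSubst (B.submatrix Fin.succ Fin.succ) (monomial e.tail 1)) := by
  have hsplit : finSuccEquiv S s (linearSubst B (monomial e 1)) =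
      finSuccEquiv S s (linearSubst B (X 0)) ^ e 0 *
        Polynomial.C (linearSubst (B.submatrix Fin.succ Fin.succ) (monomial e.tail 1)) := by
    simp only [linearSubst_monomial_one, Fin.prod_univ_succ, map_mul, map_prod, map_pow,
      finSuccEquiv_linearSubst_X_succ B hB, Finsupp.tail_apply]
  have hdeg : (finSuccEquiv S s (linearSubst B (X 0))).natDegree ≤ 1 := by
    rw [finSuccEquiv_linearSubst_X_zero]
    exact Polynomial.natDegree_linear_le
  have hcoeff := finSuccEquiv_coeff_coeff e.tail (linearSubst B (monomial e 1)) (e 0)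
  rw [Finsupp.cons_tail] at hcoeff
  have hlead := Polynomial.coeff_pow_of_natDegree_le (m := e 0) hdeg
  rw [mul_one] at hlead
  rw [← hcoeff, hsplit, Polynomial.coeff_mul_C, hlead, finSuccEquiv_linearSubst_X_zero]
  simp only [Polynomial.coeff_add, Polynomial.coeff_C_mul_X, Polynomial.coeff_C, if_true,
    one_ne_zero, if_false, add_zero]
  rw [← map_pow, coeff_C_mul]

theorem trace_symPow_of_col_zero (hB : ∀ i : Fin s, B i.succ 0 = 0) (n : ℕ) :
    (symPow n B).trace = ∑ p ∈ antidiagonal n,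
      B 0 0 ^ p.1 * (symPow p.2 (B.submatrix Fin.succ Fin.succ)).trace := by
  simp_rw [trace_symPow, mul_sum]
  rw [sum_finsuppAntidiag_univ_fin_succ]
  refine sum_congr rfl fun p _ => sum_congr rfl fun t _ => ?_
  rw [coeff_linearSubst_monomial_self_of_col_zero B hB, Finsupp.cons_zero, Finsupp.tail_cons]

end ColZero

section Ring

variable {ι S : Type*} [Fintype ι] [DecidableEq ι] [CommRing S]

theorem charpolyRev_conj (B : Matrix ι ι S) {P Q : Matrix ι ι S} (hQP : Q * P = 1) :
    (P * B * Q).charpolyRev = B.charpolyRev := by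
  rw [← reverse_charpoly, ← reverse_charpoly, charpoly_mul_comm, ← Matrix.mul_assoc, hQP,
    Matrix.one_mul]

theorem charpolyRev_map {T : Type*} [CommRing T] (f : S →+* T) (B : Matrix ι ι S) :
    (B.map f).charpolyRev = B.charpolyRev.map f := by
  rw [charpolyRev, charpolyRev, ← Polynomial.coe_mapRingHom, RingHom.map_det,
    RingHom.mapMatrix_apply]
  congr 1
  ext i j
  simp [one_apply, apply_ite]

theorem charpolyRev_of_col_zero {s : ℕ} (B : Matrix (Fin (s + 1)) (Fin (s + 1)) S)
    (hB : ∀ i : Fin s, B i.succ 0 = 0) :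
    B.charpolyRev = (1 - Polynomial.C (B 0 0) * Polynomial.X) *
      (B.submatrix Fin.succ Fin.succ).charpolyRev := by
  have hsub :
      (1 - (Polynomial.X : Polynomial S) • B.map Polynomial.C).submatrix Fin.succ Fin.succ =
        1 - (Polynomial.X : Polynomial S) • (B.submatrix Fin.succ Fin.succ).map Polynomial.C := by
    ext i j
    simp [one_apply]
  rw [charpolyRev, det_succ_column_zero, Fin.sum_univ_succ,
    sum_eq_zero (fun i _ => by simp [hB]), add_zero, Fin.succAbove_zero, hsub]
  simp [charpolyRev, Polynomial.X_mul_C]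

theorem coeff_charpolyRev_of_isHomogeneous {σ R : Type*} [CommRing R]
    (M : Matrix ι ι (MvPolynomial σ R)) (hM : ∀ i j, (M i j).IsHomogeneous 1) (k : ℕ) :
    M.charpolyRev.coeff k = homogeneousComponent k (1 - M).det := by
  rw [← coeff_aeval_C_mul_X, AlgHom.map_det, charpolyRev]
  congr 2
  ext i j
  rw [AlgHom.mapMatrix_apply, map_apply, sub_apply, sub_apply, map_sub, (hM i j).aeval_C_mul_X,
    smul_apply, map_apply, smul_eq_mul, pow_one, mul_comm]
  by_cases hij : i = j <;> simp [one_apply, hij]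

end Ring

theorem exists_isUnit_det_mulVec_single_zero {K : Type*} [Field K] {s : ℕ}
    {v : Fin (s + 1) → K} (hv : v ≠ 0) :
    ∃ P : Matrix (Fin (s + 1)) (Fin (s + 1)) K, IsUnit P.det ∧ P *ᵥ Pi.single 0 1 = v := by
  obtain ⟨i₀, hi₀⟩ := Function.ne_iff.mp hv
  refine ⟨(updateCol 1 i₀ v).submatrix id (Equiv.swap 0 i₀), ?_, ?_⟩
  · rw [det_permute', ← cramer_apply, cramer_one]
    exact ((Units.isUnit _).map (Int.castRingHom K)).mul (isUnit_iff_ne_zero.mpr hi₀)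
  · ext i
    simp

theorem exists_conj_col_zero {K : Type*} [Field K] [IsAlgClosed K] {s : ℕ}
    (B : Matrix (Fin (s + 1)) (Fin (s + 1)) K) :
    ∃ P Q : Matrix (Fin (s + 1)) (Fin (s + 1)) K,
      P * Q = 1 ∧ ∀ i : Fin s, (Q * B * P) i.succ 0 = 0 := by
  obtain ⟨μ, hμ⟩ := Module.End.exists_eigenvalue (toLin' B)
  obtain ⟨v, hv⟩ := hμ.exists_hasEigenvector
  obtain ⟨P, hP, hPv⟩ := exists_isUnit_det_mulVec_single_zero hv.2
  have hBv : B *ᵥ v = μ • v := hv.apply_eq_smul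
  have hcol : (P⁻¹ * B * P) *ᵥ Pi.single 0 1 = μ • Pi.single 0 1 := by
    rw [← mulVec_mulVec, hPv, ← mulVec_mulVec, hBv, mulVec_smul, ← hPv,
      mulVec_mulVec, nonsing_inv_mul P hP, one_mulVec]
  refine ⟨P, P⁻¹, mul_nonsing_inv P hP, fun i => ?_⟩
  simpa [mulVec_single_one] using congrFun hcol i.succ

theorem charpolyRev_mul_mk_trace_symPow_of_isAlgClosed {K : Type*} [Field K] [IsAlgClosed K] :
    ∀ {s : ℕ} (B : Matrix (Fin s) (Fin s) K),
      (B.charpolyRev : PowerSeries K) * PowerSeries.mk (fun n => (symPow n B).trace) = 1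
  | 0, B => by
    have : PowerSeries.mk (fun n => (symPow n B).trace) = 1 := by
      ext n
      rcases n with _ | n <;> simp [trace_symPow, PowerSeries.coeff_one]
    simp [charpolyRev, this]
  | s + 1, B => by
    obtain ⟨P, Q, hPQ, hB⟩ := exists_conj_col_zero B
    set B₁ := Q * B * P
    set B' := B₁.submatrix Fin.succ Fin.succ
    have htr (n : ℕ) : (symPow n B).trace = (symPow n B₁).trace :=
      (trace_symPow_conj n B hPQ).symm
    have hmk : PowerSeries.mk (fun n => (symPow n B₁).trace) =
        PowerSeries.mk (B₁ 0 0 ^ ·) * PowerSeries.mk (fun n => (symPow n B').trace) := by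
      ext n
      rw [PowerSeries.coeff_mk, trace_symPow_of_col_zero B₁ hB, PowerSeries.coeff_mul]
      simp only [PowerSeries.coeff_mk, B']
    rw [← charpolyRev_conj B hPQ, funext htr, charpolyRev_of_col_zero B₁ hB, hmk,
      Polynomial.coe_mul, mul_mul_mul_comm, charpolyRev_mul_mk_trace_symPow_of_isAlgClosed B']
    simpa using PowerSeries.one_sub_C_mul_X_mul_mk_pow (B₁ 0 0)

theorem charpolyRev_mul_mk_trace_symPow {R : Type*} [CommRing R] [IsDomain R] {s : ℕ}
    (B : Matrix (Fin s) (Fin s) R) :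
    (B.charpolyRev : PowerSeries R) * PowerSeries.mk (fun n => (symPow n B).trace) = 1 := by
  let f : R →+* AlgebraicClosure (FractionRing R) :=
    (algebraMap (FractionRing R) _).comp (algebraMap R (FractionRing R))
  have hf : Function.Injective f :=
    (algebraMap (FractionRing R) _).injective.comp (IsFractionRing.injective R (FractionRing R))
  have hmk : PowerSeries.map f (PowerSeries.mk fun n => (symPow n B).trace) =
      PowerSeries.mk fun n => (symPow n (B.map f)).trace := by
    ext n
    simp [map_trace_symPow]
  refine PowerSeries.map_injective f hf ?_
  rw [map_mul, map_one, ← Polynomial.polynomial_map_coe, ← charpolyRev_map, hmk]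
  exact charpolyRev_mul_mk_trace_symPow_of_isAlgClosed (B.map f)

end Matrix

/-- Classical MacMahon Master Theorem (boson–fermion correspondence) for the generic
`r × r` matrix `A = (a_{ij})`: `1/det(I - A) = ∑_{n ≥ 0} tr Sⁿ(A)`, where `tr Sⁿ(A)` is
the trace of the action induced by `x_i ↦ ∑_j a_{ij} x_j` on the degree-`n` homogeneous
polynomials (the `n`-th symmetric power).  Both sides are formal power series in the
entries `a_{ij}`; since `tr Sⁿ(A)` is homogeneous of degree `n`, the sum `∑_n tr Sⁿ(A)`
is the power series whose coefficient at a monomial of degree `n` is the corresponding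
coefficient of `tr Sⁿ(A)`, and the identity reads `det(I-A) ⬝ (∑_n tr Sⁿ(A)) = 1`. -/
theorem macmahon_master_theorem (r : ℕ) :
    let A : Matrix (Fin r) (Fin r) (MvPolynomial (Fin r × Fin r) ℚ) :=
      fun i j => MvPolynomial.X (i, j)
    let φ := MvPolynomial.aeval
      (R := MvPolynomial (Fin r × Fin r) ℚ)
      (fun i : Fin r => ∑ j : Fin r,
        MvPolynomial.C (A i j) * (MvPolynomial.X j :
          MvPolynomial (Fin r) (MvPolynomial (Fin r × Fin r) ℚ)))
    let trS : ℕ → MvPolynomial (Fin r × Fin r) ℚ := fun n =>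
      ∑ d ∈ Finset.univ.filter (fun d : Fin r → Fin (n + 1) => ∑ i, (d i : ℕ) = n),
        MvPolynomial.coeff (Finsupp.equivFunOnFinite.symm fun i => (d i : ℕ))
          (φ (MvPolynomial.monomial (Finsupp.equivFunOnFinite.symm fun i => (d i : ℕ)) 1))
    let sumTrS : MvPowerSeries (Fin r × Fin r) ℚ :=
      fun e => MvPolynomial.coeff e (trS (e.sum fun _ m => m))
    let detPS : MvPowerSeries (Fin r × Fin r) ℚ :=
      fun e => MvPolynomial.coeff e (1 - A).det
    detPS * sumTrS = 1 := by
  intro A φ trS sumTrS detPS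
  have htrS (n : ℕ) : trS n = (Matrix.symPow n A).trace := by
    rw [Matrix.trace_symPow, sum_finsuppAntidiag_univ_eq_sum_filter]
    rfl
  have hsum : sumTrS =
      MvPowerSeries.sumHomogeneousComponent fun n => (Matrix.symPow n A).trace := by
    ext e
    simp only [MvPowerSeries.coeff_sumHomogeneousComponent, ← htrS]
    rfl
  have hA (i j : Fin r) : (A i j).IsHomogeneous 1 := isHomogeneous_X ℚ (i, j)
  rw [hsum]
  refine coe_mul_sumHomogeneousComponent_eq_one (1 - A).det _ ?_
  convert Matrix.charpolyRev_mul_mk_trace_symPow A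
  ext k
  rw [PowerSeries.coeff_mk, Polynomial.coeff_coe, Matrix.coeff_charpolyRev_of_isHomogeneous A hA]
end
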